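/- arXiv:1605.08669 — 11 statements merged into one kernel-verified Lean document; each statement's English description precedes it below -/
import Mathlib

section
/- Assume no three of the control points are collinear (λi ≠ 0 for i = 0,1,2,3). Then for every t ∈ ℝ with w(t) ≠ 0, q(p(t)) = 0; that is, the cubic polynomial q vanishes identically along the rational cubic Bézier curve. -/
noncomputable section

/-- Determinant of the matrix [[x, y, 1], [a₁, a₂, 1], [b₁, b₂, 1]]. -/
def det3 (x y a₁ a₂ b₁ b₂ : ℝ) : ℝ :=
  x * (a₂ - b₂) - y * (a₁ - b₁) + (a₁ * b₂ - a₂ * b₁)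

/-- L_{ij}(x,y): the implicit linear form of the line through points `p` and `q`. -/
def lineL (p q : ℝ × ℝ) (x y : ℝ) : ℝ := det3 x y p.1 p.2 q.1 q.2

/-- λ_{ijk}: determinant of [[p₁,p₂,1],[q₁,q₂,1],[r₁,r₂,1]]. -/
def lam (p q r : ℝ × ℝ) : ℝ := det3 p.1 p.2 q.1 q.2 r.1 r.2

/-- Gradient of a bivariate function. -/
def grad (f : ℝ → ℝ → ℝ) (x y : ℝ) : ℝ × ℝ :=
  (deriv (fun s => f s y) x, deriv (fun s => f x s) y)

/-!
The curve point `p t` is the affine combination of the control points with weights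
`aₖ = uₖ Bₖ(t)`. Each line form `L_{ij}` is affine and vanishes at `cᵢ` and `cⱼ`, so
`w(t) L_{ij}(p t)` is a combination of the two remaining weights with coefficients `±λₖ`.
Substituting these six values, `q (p t) = w(t)⁻³ · Q`, where `Q` is a polynomial in `t`, `uₖ`, `λₖ`
that vanishes identically.
-/

theorem lineL_apply (p q : ℝ × ℝ) (x y : ℝ) :
    lineL p q x y = (p.2 - q.2) * x - (p.1 - q.1) * y + (p.1 * q.2 - p.2 * q.1) := by
  rw [lineL, det3]; ring

theorem lineL_affineCombination {ι : Type*} (s : Finset ι) (a : ι → ℝ) (c : ι → ℝ × ℝ)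
    (p q : ℝ × ℝ) (ha : ∑ i ∈ s, a i ≠ 0) :
    lineL p q ((∑ i ∈ s, a i)⁻¹ • ∑ i ∈ s, a i • c i).1
        ((∑ i ∈ s, a i)⁻¹ • ∑ i ∈ s, a i • c i).2 =
      (∑ i ∈ s, a i)⁻¹ * ∑ i ∈ s, a i * lineL p q (c i).1 (c i).2 := by
  have hsum : ∑ i ∈ s, a i * lineL p q (c i).1 (c i).2 =
      (p.2 - q.2) * ∑ i ∈ s, a i * (c i).1 - (p.1 - q.1) * ∑ i ∈ s, a i * (c i).2 +
        (p.1 * q.2 - p.2 * q.1) * ∑ i ∈ s, a i := by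
    simp only [Finset.mul_sum, ← Finset.sum_sub_distrib, ← Finset.sum_add_distrib]
    exact Finset.sum_congr rfl fun i _ => by rw [lineL_apply]; ring
  rw [hsum, lineL_apply]
  simp only [Prod.smul_fst, Prod.smul_snd, Prod.fst_sum, Prod.snd_sum, smul_eq_mul]
  field_simp

theorem cubic_implicitization_identity (u0 u1 u2 u3 l0 l1 l2 l3 s t a0 a1 a2 a3 U L b0 b1 b2 b3 : ℝ)
    (ha0 : a0 = u0 * s ^ 3) (ha1 : a1 = u1 * (t * s ^ 2)) (ha2 : a2 = u2 * (t ^ 2 * s))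
    (ha3 : a3 = u3 * t ^ 3)
    (hU : U = u0 * u1 * u2 * u3) (hL : L = l0 * l1 * l2 * l3)
    (hb0 : b0 = -(l1 ^ 2 * l2 ^ 2 * U - u1 ^ 2 * u2 ^ 2 * L))
    (hb1 : b1 = l1 ^ 3 * l3 * U - u1 ^ 3 * u3 * L)
    (hb2 : b2 = l0 * l2 ^ 3 * U - u0 * u2 ^ 3 * L)
    (hb3 : b3 = l0 ^ 2 * l3 ^ 2 * U - u0 ^ 2 * u3 ^ 2 * L) :
    b0 * ((a2 * l3 - a3 * l2) * (a0 * l3 - a3 * l0) * (a0 * l1 - a1 * l0)) +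
      b1 * ((a2 * l3 - a3 * l2) * (a2 * l0 - a0 * l2) ^ 2) +
      b2 * ((a3 * l1 - a1 * l3) ^ 2 * (a0 * l1 - a1 * l0)) +
      b3 * (a1 * l2 - a2 * l1) ^ 3 = 0 := by
  subst ha0 ha1 ha2 ha3 hU hL hb0 hb1 hb2 hb3
  ring

theorem bezier_implicit_vanishes_on_curve_general (c0 c1 c2 c3 : ℝ × ℝ)
    (u0 u1 u2 u3 : ℝ)
    (l0 l1 l2 l3 : ℝ)
    (hl0 : l0 = lam c3 c2 c1) (hl1 : l1 = lam c2 c3 c0)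
    (hl2 : l2 = lam c1 c0 c3) (hl3 : l3 = lam c0 c1 c2)
    (K0 K1 K2 K3 : ℝ → ℝ → ℝ)
    (hK0 : ∀ x y, K0 x y = lineL c0 c1 x y * lineL c1 c2 x y * lineL c2 c3 x y)
    (hK1 : ∀ x y, K1 x y = lineL c0 c1 x y * (lineL c1 c3 x y) ^ 2)
    (hK2 : ∀ x y, K2 x y = (lineL c0 c2 x y) ^ 2 * lineL c2 c3 x y)
    (hK3 : ∀ x y, K3 x y = (lineL c0 c3 x y) ^ 3)
    (U L b0 b1 b2 b3 : ℝ)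
    (hU : U = u0 * u1 * u2 * u3) (hL : L = l0 * l1 * l2 * l3)
    (hb0 : b0 = -(l1 ^ 2 * l2 ^ 2 * U - u1 ^ 2 * u2 ^ 2 * L))
    (hb1 : b1 = l1 ^ 3 * l3 * U - u1 ^ 3 * u3 * L)
    (hb2 : b2 = l0 * l2 ^ 3 * U - u0 * u2 ^ 3 * L)
    (hb3 : b3 = l0 ^ 2 * l3 ^ 2 * U - u0 ^ 2 * u3 ^ 2 * L)
    (q : ℝ → ℝ → ℝ)
    (hq : ∀ x y, q x y = b0 * K0 x y + b1 * K1 x y + b2 * K2 x y + b3 * K3 x y)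
    (w : ℝ → ℝ) (p : ℝ → ℝ × ℝ)
    (hw : ∀ t, w t = u0 * (1 - t) ^ 3 + u1 * (t * (1 - t) ^ 2) + u2 * (t ^ 2 * (1 - t)) + u3 * t ^ 3)
    (hp : ∀ t, w t ≠ 0 → p t = (w t)⁻¹ •
      ((u0 * (1 - t) ^ 3) • c0 + (u1 * (t * (1 - t) ^ 2)) • c1 +
        (u2 * (t ^ 2 * (1 - t))) • c2 + (u3 * t ^ 3) • c3)) :
    ∀ t, w t ≠ 0 → q (p t).1 (p t).2 = 0 := by
  intro t ht
  set a0 := u0 * (1 - t) ^ 3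
  set a1 := u1 * (t * (1 - t) ^ 2)
  set a2 := u2 * (t ^ 2 * (1 - t))
  set a3 := u3 * t ^ 3
  set a : Fin 4 → ℝ := ![a0, a1, a2, a3]
  set c : Fin 4 → ℝ × ℝ := ![c0, c1, c2, c3]
  have hwa : w t = ∑ k, a k := by rw [Fin.sum_univ_four]; exact hw t
  have hP : p t = (∑ k, a k)⁻¹ • ∑ k, a k • c k := by
    rw [hp t ht, hwa]; simp only [Fin.sum_univ_four]; rfl
  have line (i j : Fin 4) : lineL (c i) (c j) (p t).1 (p t).2 =
      (w t)⁻¹ * ∑ k, a k * lineL (c i) (c j) (c k).1 (c k).2 := by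
    rw [hP, hwa]; exact lineL_affineCombination _ a c _ _ (hwa ▸ ht)
  obtain ⟨e01, e12, e23, e13, e02, e03⟩ :
      lineL c0 c1 (p t).1 (p t).2 = (w t)⁻¹ * (a2 * l3 - a3 * l2) ∧
      lineL c1 c2 (p t).1 (p t).2 = (w t)⁻¹ * (a0 * l3 - a3 * l0) ∧
      lineL c2 c3 (p t).1 (p t).2 = (w t)⁻¹ * (a0 * l1 - a1 * l0) ∧
      lineL c1 c3 (p t).1 (p t).2 = (w t)⁻¹ * (a2 * l0 - a0 * l2) ∧
      lineL c0 c2 (p t).1 (p t).2 = (w t)⁻¹ * (a3 * l1 - a1 * l3) ∧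
      lineL c0 c3 (p t).1 (p t).2 = (w t)⁻¹ * (a1 * l2 - a2 * l1) := by
    refine ⟨(line 0 1).trans ?_, (line 1 2).trans ?_, (line 2 3).trans ?_, (line 1 3).trans ?_,
      (line 0 2).trans ?_, (line 0 3).trans ?_⟩ <;>
    · simp only [Fin.sum_univ_four, a, c, Matrix.cons_val, hl0, hl1, hl2, hl3, lineL, lam, det3]
      ring
  rw [hq, hK0, hK1, hK2, hK3, e01, e12, e23, e13, e02, e03]
  linear_combination (w t)⁻¹ ^ 3 * cubic_implicitization_identity u0 u1 u2 u3 l0 l1 l2 l3 (1 - t) t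
    a0 a1 a2 a3 U L b0 b1 b2 b3 rfl rfl rfl rfl hU hL hb0 hb1 hb2 hb3

/-- if no three control points are collinear, the implicit polynomial
`q` vanishes identically along the rational cubic Bézier curve. -/
theorem bezier_implicit_vanishes_on_curve (c0 c1 c2 c3 : ℝ × ℝ) (w0 w1 w2 w3 : ℝ)
    (u0 u1 u2 u3 : ℝ)
    (hu0 : u0 = w0) (hu1 : u1 = 3 * w1) (hu2 : u2 = 3 * w2) (hu3 : u3 = w3)
    (l0 l1 l2 l3 : ℝ)
    (hl0 : l0 = lam c3 c2 c1) (hl1 : l1 = lam c2 c3 c0)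
    (hl2 : l2 = lam c1 c0 c3) (hl3 : l3 = lam c0 c1 c2)
    (hnc0 : l0 ≠ 0) (hnc1 : l1 ≠ 0) (hnc2 : l2 ≠ 0) (hnc3 : l3 ≠ 0)
    (K0 K1 K2 K3 : ℝ → ℝ → ℝ)
    (hK0 : ∀ x y, K0 x y = lineL c0 c1 x y * lineL c1 c2 x y * lineL c2 c3 x y)
    (hK1 : ∀ x y, K1 x y = lineL c0 c1 x y * (lineL c1 c3 x y) ^ 2)
    (hK2 : ∀ x y, K2 x y = (lineL c0 c2 x y) ^ 2 * lineL c2 c3 x y)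
    (hK3 : ∀ x y, K3 x y = (lineL c0 c3 x y) ^ 3)
    (U L b0 b1 b2 b3 : ℝ)
    (hU : U = u0 * u1 * u2 * u3) (hL : L = l0 * l1 * l2 * l3)
    (hb0 : b0 = -(l1 ^ 2 * l2 ^ 2 * U - u1 ^ 2 * u2 ^ 2 * L))
    (hb1 : b1 = l1 ^ 3 * l3 * U - u1 ^ 3 * u3 * L)
    (hb2 : b2 = l0 * l2 ^ 3 * U - u0 * u2 ^ 3 * L)
    (hb3 : b3 = l0 ^ 2 * l3 ^ 2 * U - u0 ^ 2 * u3 ^ 2 * L)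
    (q : ℝ → ℝ → ℝ)
    (hq : ∀ x y, q x y = b0 * K0 x y + b1 * K1 x y + b2 * K2 x y + b3 * K3 x y)
    (w : ℝ → ℝ) (p : ℝ → ℝ × ℝ)
    (hw : ∀ t, w t = u0 * (1 - t) ^ 3 + u1 * (t * (1 - t) ^ 2) + u2 * (t ^ 2 * (1 - t)) + u3 * t ^ 3)
    (hp : ∀ t, w t ≠ 0 → p t = (w t)⁻¹ •
      ((u0 * (1 - t) ^ 3) • c0 + (u1 * (t * (1 - t) ^ 2)) • c1 +
        (u2 * (t ^ 2 * (1 - t))) • c2 + (u3 * t ^ 3) • c3)) :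
    ∀ t, w t ≠ 0 → q (p t).1 (p t).2 = 0 :=
  bezier_implicit_vanishes_on_curve_general c0 c1 c2 c3 u0 u1 u2 u3 l0 l1 l2 l3 hl0 hl1 hl2 hl3 K0
    K1 K2 K3 hK0 hK1 hK2 hK3 U L b0 b1 b2 b3 hU hL hb0 hb1 hb2 hb3 q hq w p hw hp
end
end

section
/- Let A be a 2×2 real matrix and v ∈ ℝ². If b̃0, b̃1, b̃2, b̃3 are the implicit coefficients computed from the transformed control points A·ci + v (i = 0,1,2,3) with the same weights, then b̃i = (det A)⁴ · bi for each i = 0,1,2,3. In particular, the coefficients (bi) are invariant under affine transformations up to a common constant scaling. -/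
/-!
`λ_{ijk}` is twice the signed area of the triangle `c_i c_j c_k`, so an affine map
`c ↦ A c + v` multiplies every `λ_i` by `det A`. The weights are untouched, and each
`b_i` is homogeneous of degree 4 in `(λ_0, λ_1, λ_2, λ_3)`, hence `b̃_i = (det A)⁴ b_i`.
-/

noncomputable section

theorem lam_affine_eq_det_mul {A : Matrix (Fin 2) (Fin 2) ℝ} {v : ℝ × ℝ} {T : ℝ × ℝ → ℝ × ℝ}
    (hT : ∀ c : ℝ × ℝ, T c = (A 0 0 * c.1 + A 0 1 * c.2 + v.1, A 1 0 * c.1 + A 1 1 * c.2 + v.2))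
    (p q r : ℝ × ℝ) : lam (T p) (T q) (T r) = A.det * lam p q r := by
  simp only [hT, lam, det3, Matrix.det_fin_two]
  ring

theorem bezier_coeffs_affine_invariant_general (c0 c1 c2 c3 : ℝ × ℝ)
    (A : Matrix (Fin 2) (Fin 2) ℝ) (v : ℝ × ℝ) (T : ℝ × ℝ → ℝ × ℝ)
    (hT : ∀ c : ℝ × ℝ, T c = (A 0 0 * c.1 + A 0 1 * c.2 + v.1, A 1 0 * c.1 + A 1 1 * c.2 + v.2))
    (u0 u1 u2 u3 : ℝ)
    (l0 l1 l2 l3 : ℝ)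
    (hl0 : l0 = lam c3 c2 c1) (hl1 : l1 = lam c2 c3 c0)
    (hl2 : l2 = lam c1 c0 c3) (hl3 : l3 = lam c0 c1 c2)
    (m0 m1 m2 m3 : ℝ)
    (hm0 : m0 = lam (T c3) (T c2) (T c1)) (hm1 : m1 = lam (T c2) (T c3) (T c0))
    (hm2 : m2 = lam (T c1) (T c0) (T c3)) (hm3 : m3 = lam (T c0) (T c1) (T c2))
    (U L M : ℝ)
    (hL : L = l0 * l1 * l2 * l3) (hM : M = m0 * m1 * m2 * m3)
    (b0 b1 b2 b3 : ℝ)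
    (hb0 : b0 = -(l1 ^ 2 * l2 ^ 2 * U - u1 ^ 2 * u2 ^ 2 * L))
    (hb1 : b1 = l1 ^ 3 * l3 * U - u1 ^ 3 * u3 * L)
    (hb2 : b2 = l0 * l2 ^ 3 * U - u0 * u2 ^ 3 * L)
    (hb3 : b3 = l0 ^ 2 * l3 ^ 2 * U - u0 ^ 2 * u3 ^ 2 * L)
    (tb0 tb1 tb2 tb3 : ℝ)
    (htb0 : tb0 = -(m1 ^ 2 * m2 ^ 2 * U - u1 ^ 2 * u2 ^ 2 * M))
    (htb1 : tb1 = m1 ^ 3 * m3 * U - u1 ^ 3 * u3 * M)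
    (htb2 : tb2 = m0 * m2 ^ 3 * U - u0 * u2 ^ 3 * M)
    (htb3 : tb3 = m0 ^ 2 * m3 ^ 2 * U - u0 ^ 2 * u3 ^ 2 * M) :
    tb0 = A.det ^ 4 * b0 ∧ tb1 = A.det ^ 4 * b1 ∧ tb2 = A.det ^ 4 * b2 ∧ tb3 = A.det ^ 4 * b3 := by
  rw [lam_affine_eq_det_mul hT, ← hl0] at hm0
  rw [lam_affine_eq_det_mul hT, ← hl1] at hm1
  rw [lam_affine_eq_det_mul hT, ← hl2] at hm2
  rw [lam_affine_eq_det_mul hT, ← hl3] at hm3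
  subst hm0 hm1 hm2 hm3 hM hL hb0 hb1 hb2 hb3 htb0 htb1 htb2 htb3
  exact ⟨by ring, by ring, by ring, by ring⟩

/-- the implicit coefficients computed from affinely transformed control
points equal `(det A)⁴` times the original coefficients. -/
theorem bezier_coeffs_affine_invariant (c0 c1 c2 c3 : ℝ × ℝ) (w0 w1 w2 w3 : ℝ)
    (A : Matrix (Fin 2) (Fin 2) ℝ) (v : ℝ × ℝ) (T : ℝ × ℝ → ℝ × ℝ)
    (hT : ∀ c : ℝ × ℝ, T c = (A 0 0 * c.1 + A 0 1 * c.2 + v.1, A 1 0 * c.1 + A 1 1 * c.2 + v.2))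
    (u0 u1 u2 u3 : ℝ)
    (hu0 : u0 = w0) (hu1 : u1 = 3 * w1) (hu2 : u2 = 3 * w2) (hu3 : u3 = w3)
    (l0 l1 l2 l3 : ℝ)
    (hl0 : l0 = lam c3 c2 c1) (hl1 : l1 = lam c2 c3 c0)
    (hl2 : l2 = lam c1 c0 c3) (hl3 : l3 = lam c0 c1 c2)
    (m0 m1 m2 m3 : ℝ)
    (hm0 : m0 = lam (T c3) (T c2) (T c1)) (hm1 : m1 = lam (T c2) (T c3) (T c0))
    (hm2 : m2 = lam (T c1) (T c0) (T c3)) (hm3 : m3 = lam (T c0) (T c1) (T c2))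
    (U L M : ℝ)
    (hU : U = u0 * u1 * u2 * u3) (hL : L = l0 * l1 * l2 * l3) (hM : M = m0 * m1 * m2 * m3)
    (b0 b1 b2 b3 : ℝ)
    (hb0 : b0 = -(l1 ^ 2 * l2 ^ 2 * U - u1 ^ 2 * u2 ^ 2 * L))
    (hb1 : b1 = l1 ^ 3 * l3 * U - u1 ^ 3 * u3 * L)
    (hb2 : b2 = l0 * l2 ^ 3 * U - u0 * u2 ^ 3 * L)
    (hb3 : b3 = l0 ^ 2 * l3 ^ 2 * U - u0 ^ 2 * u3 ^ 2 * L)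
    (tb0 tb1 tb2 tb3 : ℝ)
    (htb0 : tb0 = -(m1 ^ 2 * m2 ^ 2 * U - u1 ^ 2 * u2 ^ 2 * M))
    (htb1 : tb1 = m1 ^ 3 * m3 * U - u1 ^ 3 * u3 * M)
    (htb2 : tb2 = m0 * m2 ^ 3 * U - u0 * u2 ^ 3 * M)
    (htb3 : tb3 = m0 ^ 2 * m3 ^ 2 * U - u0 ^ 2 * u3 ^ 2 * M) :
    tb0 = A.det ^ 4 * b0 ∧ tb1 = A.det ^ 4 * b1 ∧ tb2 = A.det ^ 4 * b2 ∧ tb3 = A.det ^ 4 * b3 :=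
  bezier_coeffs_affine_invariant_general c0 c1 c2 c3 A v T hT u0 u1 u2 u3 l0 l1 l2 l3 hl0 hl1 hl2
    hl3 m0 m1 m2 m3 hm0 hm1 hm2 hm3 U L M hL hM b0 b1 b2 b3 hb0 hb1 hb2 hb3 tb0 tb1 tb2 tb3 htb0
    htb1 htb2 htb3
end
end

section
/- For any control points c0, c1, c2, c3 ∈ ℝ² and any weights w0, w1, w2, w3 ∈ ℝ, the following two identities hold: u3·λ2·φ1 + u1·λ0·φ2 + u2·λ1·φ3 = 0, and u2·λ3·φ1 + u0·λ1·φ2 + u1·λ2·φ3 = 0. -/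
noncomputable section

open scoped Matrix

-- The two relations say that this cross product is orthogonal to both of its factors.
theorem phi_vec_eq_cross {R : Type*} [CommRing R] (u0 u1 u2 u3 l0 l1 l2 l3 : R) :
    ![u0 * u2 * l1 ^ 2 - u1 ^ 2 * l0 * l2, u1 * u3 * l2 ^ 2 - u2 ^ 2 * l1 * l3,
        u1 * u2 * l0 * l3 - u0 * u3 * l1 * l2] =
      ![u2 * l3, u0 * l1, u1 * l2] ⨯₃ ![u3 * l2, u1 * l0, u2 * l1] := by
  ext i
  fin_cases i <;>
    simp only [cross_apply, Fin.isValue, Fin.zero_eta, Fin.mk_one, Fin.reduceFinMk,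
      Matrix.cons_val_zero, Matrix.cons_val_one, Matrix.cons_val] <;>
    ring

theorem phi_relations_general (u0 u1 u2 u3 : ℝ)
    (l0 l1 l2 l3 : ℝ)
    (phi1 phi2 phi3 : ℝ)
    (hphi1 : phi1 = u0 * u2 * l1 ^ 2 - u1 ^ 2 * l0 * l2)
    (hphi2 : phi2 = u1 * u3 * l2 ^ 2 - u2 ^ 2 * l1 * l3)
    (hphi3 : phi3 = u1 * u2 * l0 * l3 - u0 * u3 * l1 * l2) :
    u3 * l2 * phi1 + u1 * l0 * phi2 + u2 * l1 * phi3 = 0 ∧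
      u2 * l3 * phi1 + u0 * l1 * phi2 + u1 * l2 * phi3 = 0 := by
  have hcross := phi_vec_eq_cross u0 u1 u2 u3 l0 l1 l2 l3
  rw [← hphi1, ← hphi2, ← hphi3] at hcross
  have ha := dot_cross_self ![u2 * l3, u0 * l1, u1 * l2] ![u3 * l2, u1 * l0, u2 * l1]
  have hb := dot_self_cross ![u2 * l3, u0 * l1, u1 * l2] ![u3 * l2, u1 * l0, u2 * l1]
  rw [← hcross, Matrix.vec3_dotProduct] at ha hb
  exact ⟨by simpa using ha, by simpa using hb⟩

/-- the two linear relations between φ₁, φ₂, φ₃. -/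
theorem phi_relations (c0 c1 c2 c3 : ℝ × ℝ) (w0 w1 w2 w3 : ℝ)
    (u0 u1 u2 u3 : ℝ)
    (hu0 : u0 = w0) (hu1 : u1 = 3 * w1) (hu2 : u2 = 3 * w2) (hu3 : u3 = w3)
    (l0 l1 l2 l3 : ℝ)
    (hl0 : l0 = lam c3 c2 c1) (hl1 : l1 = lam c2 c3 c0)
    (hl2 : l2 = lam c1 c0 c3) (hl3 : l3 = lam c0 c1 c2)
    (phi1 phi2 phi3 : ℝ)
    (hphi1 : phi1 = u0 * u2 * l1 ^ 2 - u1 ^ 2 * l0 * l2)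
    (hphi2 : phi2 = u1 * u3 * l2 ^ 2 - u2 ^ 2 * l1 * l3)
    (hphi3 : phi3 = u1 * u2 * l0 * l3 - u0 * u3 * l1 * l2) :
    u3 * l2 * phi1 + u1 * l0 * phi2 + u2 * l1 * phi3 = 0 ∧
      u2 * l3 * phi1 + u0 * l1 * phi2 + u1 * l2 * phi3 = 0 :=
  phi_relations_general u0 u1 u2 u3 l0 l1 l2 l3 phi1 phi2 phi3 hphi1 hphi2 hphi3
end
end

section
/- Assume no three of the control points are collinear (λi ≠ 0 for i = 0,1,2,3). Then the gradient of q at the endpoint c0 satisfies ∇q(c0) = −Λ·u1²·φ2 · (c_{0,1} − c_{1,1}, c_{1,0} − c_{0,0}). Consequently, ∇q(c0) = (0,0) if and only if φ2 = 0 or u1 = 0; and symmetrically, ∇q(c3) = (0,0) if and only if φ1 = 0 or u2 = 0. -/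
/-! At `c0` the three lines `L01`, `L02`, `L03` through `c0` vanish, so `K2 = L02² L23` and
`K3 = L03³` have zero gradient there, while `K0` and `K1` contain `L01` to the first power only.
Hence `∇q(c0) = (b0 λ3 λ1 + b1 λ2²) ∇L01`; in this scalar the `U`-terms cancel and what is left is
`-Λ u1² φ2`. As `Λ ≠ 0` forces `c0 ≠ c1`, the vector `∇L01` is nonzero, which gives the
characterization. At `c3` the roles are played by `L23`, `K0` and `K2`. -/

noncomputable section

def HasGradAt (f : ℝ → ℝ → ℝ) (g : ℝ × ℝ) (x y : ℝ) : Prop :=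
  HasDerivAt (fun s => f s y) g.1 x ∧ HasDerivAt (fun s => f x s) g.2 y

namespace HasGradAt

variable {f h : ℝ → ℝ → ℝ} {g k : ℝ × ℝ} {x y : ℝ}

theorem grad_eq (hf : HasGradAt f g x y) : grad f x y = g :=
  Prod.ext hf.1.deriv hf.2.deriv

theorem add (hf : HasGradAt f g x y) (hh : HasGradAt h k x y) :
    HasGradAt (fun a b => f a b + h a b) (g + k) x y :=
  ⟨hf.1.add hh.1, hf.2.add hh.2⟩

theorem const_mul (c : ℝ) (hf : HasGradAt f g x y) :
    HasGradAt (fun a b => c * f a b) (c • g) x y :=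
  ⟨hf.1.const_mul c, hf.2.const_mul c⟩

theorem mul (hf : HasGradAt f g x y) (hh : HasGradAt h k x y) :
    HasGradAt (fun a b => f a b * h a b) (h x y • g + f x y • k) x y := by
  constructor
  · exact (hf.1.mul hh.1).congr_deriv (by simp only [Prod.fst_add, Prod.smul_fst, smul_eq_mul]; ring)
  · exact (hf.2.mul hh.2).congr_deriv (by simp only [Prod.snd_add, Prod.smul_snd, smul_eq_mul]; ring)

theorem mul_of_left_eq_zero (hf : HasGradAt f g x y) (hh : HasGradAt h k x y) (h0 : f x y = 0) :
    HasGradAt (fun a b => f a b * h a b) (h x y • g) x y := by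
  simpa [h0] using hf.mul hh

theorem mul_of_right_eq_zero (hf : HasGradAt f g x y) (hh : HasGradAt h k x y) (h0 : h x y = 0) :
    HasGradAt (fun a b => f a b * h a b) (f x y • k) x y := by
  simpa [h0] using hf.mul hh

theorem pow (hf : HasGradAt f g x y) (n : ℕ) :
    HasGradAt (fun a b => f a b ^ n) ((n * f x y ^ (n - 1)) • g) x y :=
  ⟨hf.1.pow n, hf.2.pow n⟩

theorem pow_of_eq_zero (hf : HasGradAt f g x y) (h0 : f x y = 0) {n : ℕ} (hn : 2 ≤ n) :
    HasGradAt (fun a b => f a b ^ n) 0 x y := by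
  simpa [h0, Nat.sub_ne_zero_of_lt hn] using hf.pow n

end HasGradAt

theorem hasGradAt_lineL (p r : ℝ × ℝ) (x y : ℝ) :
    HasGradAt (lineL p r) (p.2 - r.2, r.1 - p.1) x y := by
  constructor
  · exact ((((hasDerivAt_id x).mul_const (p.2 - r.2)).sub_const
      (y * (p.1 - r.1))).add_const (p.1 * r.2 - p.2 * r.1)).congr_deriv (one_mul _)
  · exact ((((hasDerivAt_id y).mul_const (p.1 - r.1)).const_sub
      (x * (p.2 - r.2))).add_const (p.1 * r.2 - p.2 * r.1)).congr_deriv (by simp)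

theorem lineL_left (p r : ℝ × ℝ) : lineL p r p.1 p.2 = 0 := by
  simp only [lineL, det3]; ring

theorem lineL_right (p r : ℝ × ℝ) : lineL p r r.1 r.2 = 0 := by
  simp only [lineL, det3]; ring

theorem lineL_apply_s4 (p r s : ℝ × ℝ) : lineL p r s.1 s.2 = lam s p r := rfl

theorem lam_rotate (p q r : ℝ × ℝ) : lam p q r = lam q r p := by
  simp only [lam, det3]; ring

theorem lam_swap (p q r : ℝ × ℝ) : lam p q r = -lam q p r := by
  simp only [lam, det3]; ring

theorem lam_self (p r : ℝ × ℝ) : lam p p r = 0 := by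
  simp only [lam, det3]; ring

theorem normal_ne_zero_of_lam_ne_zero {p r s : ℝ × ℝ} (h : lam p r s ≠ 0) :
    ((p.2 - r.2, r.1 - p.1) : ℝ × ℝ) ≠ 0 := by
  intro h0
  obtain ⟨h1, h2⟩ : p.2 = r.2 ∧ r.1 = p.1 := by simpa [Prod.ext_iff, sub_eq_zero] using h0
  obtain rfl : p = r := Prod.ext h2.symm h1
  exact h (lam_self p s)

def implicitCubic (c0 c1 c2 c3 : ℝ × ℝ) (b0 b1 b2 b3 x y : ℝ) : ℝ :=
  b0 * (lineL c0 c1 x y * lineL c1 c2 x y * lineL c2 c3 x y) +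
    b1 * (lineL c0 c1 x y * lineL c1 c3 x y ^ 2) +
    b2 * (lineL c0 c2 x y ^ 2 * lineL c2 c3 x y) + b3 * lineL c0 c3 x y ^ 3

section implicitCubic

variable (c0 c1 c2 c3 : ℝ × ℝ) (b0 b1 b2 b3 : ℝ)

theorem hasGradAt_implicitCubic_start :
    HasGradAt (implicitCubic c0 c1 c2 c3 b0 b1 b2 b3)
      ((b0 * lam c0 c1 c2 * lam c0 c2 c3 + b1 * lam c0 c1 c3 ^ 2) • (c0.2 - c1.2, c1.1 - c0.1))
      c0.1 c0.2 := by
  have L (p r : ℝ × ℝ) := hasGradAt_lineL p r c0.1 c0.2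
  have K0 := ((L c0 c1).mul_of_left_eq_zero (L c1 c2) (lineL_left c0 c1)).mul_of_left_eq_zero
    (L c2 c3) (by simp [lineL_left])
  have K1 := (L c0 c1).mul_of_left_eq_zero ((L c1 c3).pow 2) (lineL_left c0 c1)
  have K2 := ((L c0 c2).pow_of_eq_zero (lineL_left c0 c2) le_rfl).mul_of_left_eq_zero
    (L c2 c3) (by simp [lineL_left])
  have K3 := (L c0 c3).pow_of_eq_zero (lineL_left c0 c3) (n := 3) (by norm_num)
  convert (((K0.const_mul b0).add (K1.const_mul b1)).add (K2.const_mul b2)).add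
    (K3.const_mul b3) using 1
  · rfl
  · simp only [lineL_apply_s4, smul_zero, add_zero]
    module

theorem hasGradAt_implicitCubic_end :
    HasGradAt (implicitCubic c0 c1 c2 c3 b0 b1 b2 b3)
      ((b0 * lam c3 c0 c1 * lam c3 c1 c2 + b2 * lam c3 c0 c2 ^ 2) • (c2.2 - c3.2, c3.1 - c2.1))
      c3.1 c3.2 := by
  have L (p r : ℝ × ℝ) := hasGradAt_lineL p r c3.1 c3.2
  have K0 := ((L c0 c1).mul (L c1 c2)).mul_of_right_eq_zero (L c2 c3) (lineL_right c2 c3)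
  have K1 := (L c0 c1).mul_of_right_eq_zero ((L c1 c3).pow_of_eq_zero (lineL_right c1 c3) le_rfl)
    (by simp [lineL_right])
  have K2 := ((L c0 c2).pow 2).mul_of_right_eq_zero (L c2 c3) (lineL_right c2 c3)
  have K3 := (L c0 c3).pow_of_eq_zero (lineL_right c0 c3) (n := 3) (by norm_num)
  convert (((K0.const_mul b0).add (K1.const_mul b1)).add (K2.const_mul b2)).add
    (K3.const_mul b3) using 1
  · rfl
  · simp only [lineL_apply_s4, smul_zero, add_zero]
    module

end implicitCubic

theorem gradient_at_endpoints_general (c0 c1 c2 c3 : ℝ × ℝ)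
    (u0 u1 u2 u3 : ℝ)
    (l0 l1 l2 l3 : ℝ)
    (hl0 : l0 = lam c3 c2 c1) (hl1 : l1 = lam c2 c3 c0)
    (hl2 : l2 = lam c1 c0 c3) (hl3 : l3 = lam c0 c1 c2)
    (hnc0 : l0 ≠ 0) (hnc1 : l1 ≠ 0) (hnc2 : l2 ≠ 0) (hnc3 : l3 ≠ 0)
    (K0 K1 K2 K3 : ℝ → ℝ → ℝ)
    (hK0 : ∀ x y, K0 x y = lineL c0 c1 x y * lineL c1 c2 x y * lineL c2 c3 x y)
    (hK1 : ∀ x y, K1 x y = lineL c0 c1 x y * (lineL c1 c3 x y) ^ 2)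
    (hK2 : ∀ x y, K2 x y = (lineL c0 c2 x y) ^ 2 * lineL c2 c3 x y)
    (hK3 : ∀ x y, K3 x y = (lineL c0 c3 x y) ^ 3)
    (U L b0 b1 b2 b3 : ℝ)
    (hL : L = l0 * l1 * l2 * l3)
    (hb0 : b0 = -(l1 ^ 2 * l2 ^ 2 * U - u1 ^ 2 * u2 ^ 2 * L))
    (hb1 : b1 = l1 ^ 3 * l3 * U - u1 ^ 3 * u3 * L)
    (hb2 : b2 = l0 * l2 ^ 3 * U - u0 * u2 ^ 3 * L)
    (q : ℝ → ℝ → ℝ)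
    (hq : ∀ x y, q x y = b0 * K0 x y + b1 * K1 x y + b2 * K2 x y + b3 * K3 x y)
    (phi1 phi2 : ℝ)
    (hphi1 : phi1 = u0 * u2 * l1 ^ 2 - u1 ^ 2 * l0 * l2)
    (hphi2 : phi2 = u1 * u3 * l2 ^ 2 - u2 ^ 2 * l1 * l3) :
    grad q c0.1 c0.2 = (-(L * u1 ^ 2 * phi2)) • ((c0.2 - c1.2, c1.1 - c0.1) : ℝ × ℝ) ∧
      (grad q c0.1 c0.2 = (0 : ℝ × ℝ) ↔ phi2 = 0 ∨ u1 = 0) ∧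
      (grad q c3.1 c3.2 = (0 : ℝ × ℝ) ↔ phi1 = 0 ∨ u2 = 0) := by
  have hq_eq : q = implicitCubic c0 c1 c2 c3 b0 b1 b2 b3 := by
    funext x y
    rw [hq, hK0, hK1, hK2, hK3]
    rfl
  have grad_start : grad q c0.1 c0.2 = (-(L * u1 ^ 2 * phi2)) • (c0.2 - c1.2, c1.1 - c0.1) := by
    rw [hq_eq, (hasGradAt_implicitCubic_start ..).grad_eq, lam_rotate c0 c2 c3, lam_swap c0 c1 c3,
      ← hl1, ← hl2, ← hl3, hb0, hb1, hphi2]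
    congr 1
    ring
  have grad_end : grad q c3.1 c3.2 = (-(L * u2 ^ 2 * phi1)) • (c2.2 - c3.2, c3.1 - c2.1) := by
    rw [hq_eq, (hasGradAt_implicitCubic_end ..).grad_eq, lam_rotate c3 c0 c1, lam_swap c0 c1 c3,
      lam_swap c3 c1 c2, lam_rotate c1 c3 c2, lam_rotate c3 c0 c2, lam_rotate c0 c2 c3,
      ← hl0, ← hl1, ← hl2, hb0, hb2, hphi1]
    congr 1
    ring
  have hL0 : L ≠ 0 := hL ▸ mul_ne_zero (mul_ne_zero (mul_ne_zero hnc0 hnc1) hnc2) hnc3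
  have normal01 := normal_ne_zero_of_lam_ne_zero (hl3 ▸ hnc3)
  have normal23 := normal_ne_zero_of_lam_ne_zero (hl1 ▸ hnc1)
  refine ⟨grad_start, ?_, ?_⟩
  · rw [grad_start, smul_eq_zero, or_iff_left normal01]
    simp [hL0, or_comm]
  · rw [grad_end, smul_eq_zero, or_iff_left normal23]
    simp [hL0, or_comm]

/-- formula for the gradient of `q` at the endpoint `c0`, and the
characterization of endpoint singularities. -/
theorem gradient_at_endpoints (c0 c1 c2 c3 : ℝ × ℝ) (w0 w1 w2 w3 : ℝ)
    (u0 u1 u2 u3 : ℝ)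
    (hu0 : u0 = w0) (hu1 : u1 = 3 * w1) (hu2 : u2 = 3 * w2) (hu3 : u3 = w3)
    (l0 l1 l2 l3 : ℝ)
    (hl0 : l0 = lam c3 c2 c1) (hl1 : l1 = lam c2 c3 c0)
    (hl2 : l2 = lam c1 c0 c3) (hl3 : l3 = lam c0 c1 c2)
    (hnc0 : l0 ≠ 0) (hnc1 : l1 ≠ 0) (hnc2 : l2 ≠ 0) (hnc3 : l3 ≠ 0)
    (K0 K1 K2 K3 : ℝ → ℝ → ℝ)
    (hK0 : ∀ x y, K0 x y = lineL c0 c1 x y * lineL c1 c2 x y * lineL c2 c3 x y)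
    (hK1 : ∀ x y, K1 x y = lineL c0 c1 x y * (lineL c1 c3 x y) ^ 2)
    (hK2 : ∀ x y, K2 x y = (lineL c0 c2 x y) ^ 2 * lineL c2 c3 x y)
    (hK3 : ∀ x y, K3 x y = (lineL c0 c3 x y) ^ 3)
    (U L b0 b1 b2 b3 : ℝ)
    (hU : U = u0 * u1 * u2 * u3) (hL : L = l0 * l1 * l2 * l3)
    (hb0 : b0 = -(l1 ^ 2 * l2 ^ 2 * U - u1 ^ 2 * u2 ^ 2 * L))
    (hb1 : b1 = l1 ^ 3 * l3 * U - u1 ^ 3 * u3 * L)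
    (hb2 : b2 = l0 * l2 ^ 3 * U - u0 * u2 ^ 3 * L)
    (hb3 : b3 = l0 ^ 2 * l3 ^ 2 * U - u0 ^ 2 * u3 ^ 2 * L)
    (q : ℝ → ℝ → ℝ)
    (hq : ∀ x y, q x y = b0 * K0 x y + b1 * K1 x y + b2 * K2 x y + b3 * K3 x y)
    (phi1 phi2 phi3 : ℝ)
    (hphi1 : phi1 = u0 * u2 * l1 ^ 2 - u1 ^ 2 * l0 * l2)
    (hphi2 : phi2 = u1 * u3 * l2 ^ 2 - u2 ^ 2 * l1 * l3)
    (hphi3 : phi3 = u1 * u2 * l0 * l3 - u0 * u3 * l1 * l2) :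
    grad q c0.1 c0.2 = (-(L * u1 ^ 2 * phi2)) • ((c0.2 - c1.2, c1.1 - c0.1) : ℝ × ℝ) ∧
      (grad q c0.1 c0.2 = (0 : ℝ × ℝ) ↔ phi2 = 0 ∨ u1 = 0) ∧
      (grad q c3.1 c3.2 = (0 : ℝ × ℝ) ↔ phi1 = 0 ∨ u2 = 0) :=
  gradient_at_endpoints_general c0 c1 c2 c3 u0 u1 u2 u3 l0 l1 l2 l3 hl0 hl1 hl2 hl3 hnc0 hnc1 hnc2
    hnc3 K0 K1 K2 K3 hK0 hK1 hK2 hK3 U L b0 b1 b2 b3 hL hb0 hb1 hb2 q hq phi1 phi2 hphi1 hphi2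
end
end

section
/- Assume no three of the control points are collinear (λi ≠ 0 for i = 0,1,2,3), all weights are nonzero, φ1 ≠ 0, φ2 ≠ 0, and D' := φ1φ3u2² − φ1φ2u1u2 + φ2²u0u1 ≠ 0. Define the point s = (φ1φ3u2²·c0 − φ1φ2u1u2·c1 + φ2²u0u1·c3)/D' (a barycentric combination of c0, c1, c3). Then S̃1(s) = 0 and S̃2(s) = 0, and consequently q(s) = 0 and ∇q(s) = (0,0); i.e., s is the double point of the curve. -/
noncomputable section

/-! Every line form `L_{ij}` is affine. At a point with barycentric weights `(t₀, t₁, t₃)` with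
respect to `c0, c1, c3` it takes the value `t₀ λ_{0ij} + t₁ λ_{1ij} + t₃ λ_{3ij}`, and its
derivative along `c_k - c0` is `λ_{kij} - λ_{0ij}`; each of these determinants is `0` or `±λ_m`.
So `S̃1(s)`, `S̃2(s)`, `q(s)` and the derivatives of `q` at `s` along `c1 - c0` and `c3 - c0`
reduce to polynomial identities in the `u_i` and `λ_i` alone, and the two directions span the
plane because `λ2 ≠ 0`. -/

theorem hasDerivAt_lineL_fst (p q : ℝ × ℝ) (x y : ℝ) :
    HasDerivAt (fun t => lineL p q t y) (p.2 - q.2) x := by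
  have := (((hasDerivAt_id x).mul_const (p.2 - q.2)).sub_const (y * (p.1 - q.1))).add_const
    (p.1 * q.2 - p.2 * q.1)
  simpa [lineL, det3] using this

theorem hasDerivAt_lineL_snd (p q : ℝ × ℝ) (x y : ℝ) :
    HasDerivAt (fun t => lineL p q x t) (q.1 - p.1) y := by
  have := (((hasDerivAt_id y).mul_const (p.1 - q.1)).const_sub (x * (p.2 - q.2))).add_const
    (p.1 * q.2 - p.2 * q.1)
  simpa [lineL, det3] using this

theorem lineL_of_smul_eq {p q x y z s : ℝ × ℝ} {D a b e : ℝ}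
    (hs : D • s = a • x + b • y + e • z) (hD : a + b + e = D) :
    D * lineL p q s.1 s.2 = a * lam x p q + b * lam y p q + e * lam z p q := by
  have h1 := congrArg Prod.fst hs
  have h2 := congrArg Prod.snd hs
  simp only [Prod.smul_fst, Prod.smul_snd, Prod.fst_add, Prod.snd_add, smul_eq_mul] at h1 h2
  simp only [lineL, lam, det3]
  linear_combination (p.2 - q.2) * h1 - (p.1 - q.1) * h2 + (p.1 * q.2 - p.2 * q.1) * hD.symm

theorem Prod.eq_zero_of_dot_eq_zero {g v w : ℝ × ℝ} (hv : g.1 * v.1 + g.2 * v.2 = 0)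
    (hw : g.1 * w.1 + g.2 * w.2 = 0) (hvw : v.1 * w.2 - v.2 * w.1 ≠ 0) : g = 0 := by
  have h1 : g.1 * (v.1 * w.2 - v.2 * w.1) = 0 := by linear_combination w.2 * hv - v.2 * hw
  have h2 : g.2 * (v.1 * w.2 - v.2 * w.1) = 0 := by linear_combination v.1 * hw - w.1 * hv
  exact Prod.ext (by simpa [hvw] using h1) (by simpa [hvw] using h2)

def cubicForm (b0 b1 b2 b3 L01 L12 L23 L13 L02 L03 : ℝ) : ℝ :=
  b0 * (L01 * L12 * L23) + b1 * (L01 * L13 ^ 2) + b2 * (L02 ^ 2 * L23) + b3 * L03 ^ 3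

def cubicFormDeriv (b0 b1 b2 b3 L01 L12 L23 L13 L02 L03 d01 d12 d23 d13 d02 d03 : ℝ) : ℝ :=
  b0 * (d01 * L12 * L23 + L01 * d12 * L23 + L01 * L12 * d23)
    + b1 * (d01 * L13 ^ 2 + 2 * L01 * L13 * d13)
    + b2 * (2 * L02 * d02 * L23 + L02 ^ 2 * d23) + b3 * (3 * L03 ^ 2 * d03)

theorem cubicForm_mul (b0 b1 b2 b3 D L01 L12 L23 L13 L02 L03 : ℝ) :
    cubicForm b0 b1 b2 b3 (D * L01) (D * L12) (D * L23) (D * L13) (D * L02) (D * L03) =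
      D ^ 3 * cubicForm b0 b1 b2 b3 L01 L12 L23 L13 L02 L03 := by
  unfold cubicForm; ring

theorem cubicFormDeriv_mul (b0 b1 b2 b3 D L01 L12 L23 L13 L02 L03 d01 d12 d23 d13 d02 d03 : ℝ) :
    cubicFormDeriv b0 b1 b2 b3 (D * L01) (D * L12) (D * L23) (D * L13) (D * L02) (D * L03)
        d01 d12 d23 d13 d02 d03 =
      D ^ 2 * cubicFormDeriv b0 b1 b2 b3 L01 L12 L23 L13 L02 L03 d01 d12 d23 d13 d02 d03 := by
  unfold cubicFormDeriv; ring

theorem HasDerivAt.cubicForm (b0 b1 b2 b3 : ℝ) {f01 f12 f23 f13 f02 f03 : ℝ → ℝ}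
    {d01 d12 d23 d13 d02 d03 x : ℝ} (h01 : HasDerivAt f01 d01 x) (h12 : HasDerivAt f12 d12 x)
    (h23 : HasDerivAt f23 d23 x) (h13 : HasDerivAt f13 d13 x) (h02 : HasDerivAt f02 d02 x)
    (h03 : HasDerivAt f03 d03 x) :
    HasDerivAt (fun t => cubicForm b0 b1 b2 b3 (f01 t) (f12 t) (f23 t) (f13 t) (f02 t) (f03 t))
      (cubicFormDeriv b0 b1 b2 b3 (f01 x) (f12 x) (f23 x) (f13 x) (f02 x) (f03 x)
        d01 d12 d23 d13 d02 d03) x := by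
  have := ((((h01.mul h12).mul h23).const_mul b0).add ((h01.mul (h13.pow 2)).const_mul b1)).add
    (((h02.pow 2).mul h23).const_mul b2) |>.add ((h03.pow 3).const_mul b3)
  exact this.congr_deriv (by simp only [cubicFormDeriv, Pi.mul_apply, Pi.pow_apply]; push_cast; ring)

def lineCubic (b0 b1 b2 b3 : ℝ) (c0 c1 c2 c3 : ℝ × ℝ) (x y : ℝ) : ℝ :=
  cubicForm b0 b1 b2 b3 (lineL c0 c1 x y) (lineL c1 c2 x y) (lineL c2 c3 x y)
    (lineL c1 c3 x y) (lineL c0 c2 x y) (lineL c0 c3 x y)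

theorem grad_lineCubic (b0 b1 b2 b3 : ℝ) (c0 c1 c2 c3 : ℝ × ℝ) (x y : ℝ) :
    grad (lineCubic b0 b1 b2 b3 c0 c1 c2 c3) x y =
      (cubicFormDeriv b0 b1 b2 b3 (lineL c0 c1 x y) (lineL c1 c2 x y) (lineL c2 c3 x y)
          (lineL c1 c3 x y) (lineL c0 c2 x y) (lineL c0 c3 x y)
          (c0.2 - c1.2) (c1.2 - c2.2) (c2.2 - c3.2) (c1.2 - c3.2) (c0.2 - c2.2) (c0.2 - c3.2),
        cubicFormDeriv b0 b1 b2 b3 (lineL c0 c1 x y) (lineL c1 c2 x y) (lineL c2 c3 x y)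
          (lineL c1 c3 x y) (lineL c0 c2 x y) (lineL c0 c3 x y)
          (c1.1 - c0.1) (c2.1 - c1.1) (c3.1 - c2.1) (c3.1 - c1.1) (c2.1 - c0.1) (c3.1 - c0.1)) :=
  Prod.ext
    (HasDerivAt.cubicForm b0 b1 b2 b3 (hasDerivAt_lineL_fst _ _ _ _) (hasDerivAt_lineL_fst _ _ _ _)
      (hasDerivAt_lineL_fst _ _ _ _) (hasDerivAt_lineL_fst _ _ _ _) (hasDerivAt_lineL_fst _ _ _ _)
      (hasDerivAt_lineL_fst _ _ _ _)).deriv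
    (HasDerivAt.cubicForm b0 b1 b2 b3 (hasDerivAt_lineL_snd _ _ _ _) (hasDerivAt_lineL_snd _ _ _ _)
      (hasDerivAt_lineL_snd _ _ _ _) (hasDerivAt_lineL_snd _ _ _ _) (hasDerivAt_lineL_snd _ _ _ _)
      (hasDerivAt_lineL_snd _ _ _ _)).deriv

theorem lineL_values_of_smul_eq {c0 c1 c2 c3 s : ℝ × ℝ} {D a b e : ℝ}
    (hs : D • s = a • c0 + b • c1 + e • c3) (hD : a + b + e = D) :
    D * lineL c0 c1 s.1 s.2 = -(e * lam c1 c0 c3) ∧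
    D * lineL c1 c2 s.1 s.2 = a * lam c0 c1 c2 - e * lam c3 c2 c1 ∧
    D * lineL c2 c3 s.1 s.2 = a * lam c2 c3 c0 - b * lam c3 c2 c1 ∧
    D * lineL c1 c3 s.1 s.2 = -(a * lam c1 c0 c3) ∧
    D * lineL c0 c2 s.1 s.2 = -(b * lam c0 c1 c2) + e * lam c2 c3 c0 ∧
    D * lineL c0 c3 s.1 s.2 = b * lam c1 c0 c3 := by
  simp only [lineL_of_smul_eq hs hD]
  refine ⟨?_, ?_, ?_, ?_, ?_, ?_⟩ <;> simp only [lam, det3] <;> ring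

theorem grad_lineCubic_dot_sub (b0 b1 b2 b3 : ℝ) (c0 c1 c2 c3 : ℝ × ℝ) (x y : ℝ) :
    let g := grad (lineCubic b0 b1 b2 b3 c0 c1 c2 c3) x y
    g.1 * (c1 - c0).1 + g.2 * (c1 - c0).2 =
      cubicFormDeriv b0 b1 b2 b3 (lineL c0 c1 x y) (lineL c1 c2 x y) (lineL c2 c3 x y)
        (lineL c1 c3 x y) (lineL c0 c2 x y) (lineL c0 c3 x y)
        0 (-lam c0 c1 c2) (-(lam c3 c2 c1 + lam c2 c3 c0)) (lam c1 c0 c3) (-lam c0 c1 c2)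
        (lam c1 c0 c3) ∧
    g.1 * (c3 - c0).1 + g.2 * (c3 - c0).2 =
      cubicFormDeriv b0 b1 b2 b3 (lineL c0 c1 x y) (lineL c1 c2 x y) (lineL c2 c3 x y)
        (lineL c1 c3 x y) (lineL c0 c2 x y) (lineL c0 c3 x y)
        (-lam c1 c0 c3) (-(lam c3 c2 c1 + lam c0 c1 c2)) (-lam c2 c3 c0) (lam c1 c0 c3)
        (lam c2 c3 c0) 0 := by
  simp only [grad_lineCubic, Prod.fst_sub, Prod.snd_sub, cubicFormDeriv, lam, det3]
  constructor <;> ring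

theorem doublePoint_mem_S_lines {u0 u1 u2 u3 l0 l1 l2 l3 φ1 φ2 φ3 t0 t1 t3 : ℝ}
    (hφ1 : φ1 = u0 * u2 * l1 ^ 2 - u1 ^ 2 * l0 * l2)
    (hφ2 : φ2 = u1 * u3 * l2 ^ 2 - u2 ^ 2 * l1 * l3)
    (hφ3 : φ3 = u1 * u2 * l0 * l3 - u0 * u3 * l1 * l2)
    (ht0 : t0 = φ1 * φ3 * u2 ^ 2) (ht1 : t1 = -(φ1 * φ2 * u1 * u2)) (ht3 : t3 = φ2 ^ 2 * u0 * u1) :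
    u2 * φ1 * (-(t1 * l3) + t3 * l1) - u1 * φ3 * (t1 * l2) = 0 ∧
    u1 * φ2 * -(t0 * l2) - u2 * φ3 * (t1 * l2) = 0 := by
  have hφ : u0 * φ2 * l1 + u1 * φ3 * l2 + u2 * φ1 * l3 = 0 := by rw [hφ1, hφ2, hφ3]; ring
  subst ht0 ht1 ht3
  constructor
  · linear_combination φ1 * φ2 * u1 * u2 * hφ
  · ring

/-- The six line values are `D' L_{ij}(s)` and the directions are the derivatives of the `L_{ij}`
along `c1 - c0` and `c3 - c0`, all written through `l_i = λ_i`
(see `lineL_values_of_smul_eq` and `grad_lineCubic_dot_sub`). -/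
theorem cubicForm_singular_at_doublePoint
    {u0 u1 u2 u3 l0 l1 l2 l3 U L b0 b1 b2 b3 φ1 φ2 φ3 t0 t1 t3 : ℝ}
    (hU : U = u0 * u1 * u2 * u3) (hL : L = l0 * l1 * l2 * l3)
    (hb0 : b0 = -(l1 ^ 2 * l2 ^ 2 * U - u1 ^ 2 * u2 ^ 2 * L))
    (hb1 : b1 = l1 ^ 3 * l3 * U - u1 ^ 3 * u3 * L)
    (hb2 : b2 = l0 * l2 ^ 3 * U - u0 * u2 ^ 3 * L)
    (hb3 : b3 = l0 ^ 2 * l3 ^ 2 * U - u0 ^ 2 * u3 ^ 2 * L)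
    (hφ1 : φ1 = u0 * u2 * l1 ^ 2 - u1 ^ 2 * l0 * l2)
    (hφ2 : φ2 = u1 * u3 * l2 ^ 2 - u2 ^ 2 * l1 * l3)
    (hφ3 : φ3 = u1 * u2 * l0 * l3 - u0 * u3 * l1 * l2)
    (ht0 : t0 = φ1 * φ3 * u2 ^ 2) (ht1 : t1 = -(φ1 * φ2 * u1 * u2)) (ht3 : t3 = φ2 ^ 2 * u0 * u1) :
    cubicForm b0 b1 b2 b3 (-(t3 * l2)) (t0 * l3 - t3 * l0) (t0 * l1 - t1 * l0) (-(t0 * l2))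
        (-(t1 * l3) + t3 * l1) (t1 * l2) = 0 ∧
    cubicFormDeriv b0 b1 b2 b3 (-(t3 * l2)) (t0 * l3 - t3 * l0) (t0 * l1 - t1 * l0) (-(t0 * l2))
        (-(t1 * l3) + t3 * l1) (t1 * l2) 0 (-l3) (-(l0 + l1)) l2 (-l3) l2 = 0 ∧
    cubicFormDeriv b0 b1 b2 b3 (-(t3 * l2)) (t0 * l3 - t3 * l0) (t0 * l1 - t1 * l0) (-(t0 * l2))
        (-(t1 * l3) + t3 * l1) (t1 * l2) (-l2) (-(l0 + l3)) (-l1) l2 l1 0 = 0 := by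
  subst_vars
  refine ⟨?_, ?_, ?_⟩ <;> simp only [cubicForm, cubicFormDeriv] <;> ring

theorem double_point_barycentric_c0c1c3_general (c0 c1 c2 c3 : ℝ × ℝ)
    (u0 u1 u2 u3 : ℝ)
    (l0 l1 l2 l3 : ℝ)
    (hl0 : l0 = lam c3 c2 c1) (hl1 : l1 = lam c2 c3 c0)
    (hl2 : l2 = lam c1 c0 c3) (hl3 : l3 = lam c0 c1 c2)
    (hnc2 : l2 ≠ 0)
    (K0 K1 K2 K3 : ℝ → ℝ → ℝ)
    (hK0 : ∀ x y, K0 x y = lineL c0 c1 x y * lineL c1 c2 x y * lineL c2 c3 x y)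
    (hK1 : ∀ x y, K1 x y = lineL c0 c1 x y * (lineL c1 c3 x y) ^ 2)
    (hK2 : ∀ x y, K2 x y = (lineL c0 c2 x y) ^ 2 * lineL c2 c3 x y)
    (hK3 : ∀ x y, K3 x y = (lineL c0 c3 x y) ^ 3)
    (U L b0 b1 b2 b3 : ℝ)
    (hU : U = u0 * u1 * u2 * u3) (hL : L = l0 * l1 * l2 * l3)
    (hb0 : b0 = -(l1 ^ 2 * l2 ^ 2 * U - u1 ^ 2 * u2 ^ 2 * L))
    (hb1 : b1 = l1 ^ 3 * l3 * U - u1 ^ 3 * u3 * L)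
    (hb2 : b2 = l0 * l2 ^ 3 * U - u0 * u2 ^ 3 * L)
    (hb3 : b3 = l0 ^ 2 * l3 ^ 2 * U - u0 ^ 2 * u3 ^ 2 * L)
    (q : ℝ → ℝ → ℝ)
    (hq : ∀ x y, q x y = b0 * K0 x y + b1 * K1 x y + b2 * K2 x y + b3 * K3 x y)
    (phi1 phi2 phi3 : ℝ)
    (hphi1 : phi1 = u0 * u2 * l1 ^ 2 - u1 ^ 2 * l0 * l2)
    (hphi2 : phi2 = u1 * u3 * l2 ^ 2 - u2 ^ 2 * l1 * l3)
    (hphi3 : phi3 = u1 * u2 * l0 * l3 - u0 * u3 * l1 * l2)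
    (S1 S2 : ℝ → ℝ → ℝ)
    (hS1 : ∀ x y, S1 x y = u2 * phi1 * lineL c0 c2 x y - u1 * phi3 * lineL c0 c3 x y)
    (hS2 : ∀ x y, S2 x y = u1 * phi2 * lineL c1 c3 x y - u2 * phi3 * lineL c0 c3 x y)
    (D' : ℝ) (hD' : D' = phi1 * phi3 * u2 ^ 2 - phi1 * phi2 * u1 * u2 + phi2 ^ 2 * u0 * u1)
    (hD'ne : D' ≠ 0)
    (s : ℝ × ℝ)
    (hs : s = D'⁻¹ • ((phi1 * phi3 * u2 ^ 2) • c0 - (phi1 * phi2 * u1 * u2) • c1 +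
      (phi2 ^ 2 * u0 * u1) • c3)) :
    S1 s.1 s.2 = 0 ∧ S2 s.1 s.2 = 0 ∧ q s.1 s.2 = 0 ∧ grad q s.1 s.2 = (0 : ℝ × ℝ) := by
  subst hl0 hl1 hl2 hl3
  have hq' : q = lineCubic b0 b1 b2 b3 c0 c1 c2 c3 := by
    funext x y; rw [hq, hK0, hK1, hK2, hK3]; rfl
  have hsD : D' • s = (phi1 * phi3 * u2 ^ 2) • c0 + (-(phi1 * phi2 * u1 * u2)) • c1 +
      (phi2 ^ 2 * u0 * u1) • c3 := by
    rw [hs, smul_inv_smul₀ hD'ne, neg_smul, ← sub_eq_add_neg]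
  obtain ⟨h01, h12, h23, h13, h02, h03⟩ := lineL_values_of_smul_eq hsD (by rw [hD']; ring)
  obtain ⟨hS1s, hS2s⟩ := doublePoint_mem_S_lines hphi1 hphi2 hphi3 rfl rfl rfl
  obtain ⟨hqs, hd1, hd3⟩ :=
    cubicForm_singular_at_doublePoint hU hL hb0 hb1 hb2 hb3 hphi1 hphi2 hphi3 rfl rfl rfl
  refine ⟨?_, ?_, ?_, ?_⟩
  · refine eq_zero_of_ne_zero_of_mul_left_eq_zero hD'ne ?_
    rw [hS1]
    linear_combination u2 * phi1 * h02 - u1 * phi3 * h03 + hS1s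
  · refine eq_zero_of_ne_zero_of_mul_left_eq_zero hD'ne ?_
    rw [hS2]
    linear_combination u1 * phi2 * h13 - u2 * phi3 * h03 + hS2s
  · refine eq_zero_of_ne_zero_of_mul_left_eq_zero (pow_ne_zero 3 hD'ne) ?_
    rw [hq', lineCubic, ← cubicForm_mul, h01, h12, h23, h13, h02, h03, hqs]
  · obtain ⟨hdot1, hdot3⟩ := grad_lineCubic_dot_sub b0 b1 b2 b3 c0 c1 c2 c3 s.1 s.2
    rw [hq']
    refine Prod.eq_zero_of_dot_eq_zero (v := c1 - c0) (w := c3 - c0) ?_ ?_ ?_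
    · rw [hdot1]
      refine eq_zero_of_ne_zero_of_mul_left_eq_zero (pow_ne_zero 2 hD'ne) ?_
      rw [← cubicFormDeriv_mul, h01, h12, h23, h13, h02, h03, hd1]
    · rw [hdot3]
      refine eq_zero_of_ne_zero_of_mul_left_eq_zero (pow_ne_zero 2 hD'ne) ?_
      rw [← cubicFormDeriv_mul, h01, h12, h23, h13, h02, h03, hd3]
    · have : (c1 - c0).1 * (c3 - c0).2 - (c1 - c0).2 * (c3 - c0).1 = -lam c1 c0 c3 := by
        simp only [Prod.fst_sub, Prod.snd_sub, lam, det3]; ring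
      rwa [this, neg_ne_zero]

/-- the barycentric combination of `c0, c1, c3` giving the double point. -/
theorem double_point_barycentric_c0c1c3 (c0 c1 c2 c3 : ℝ × ℝ) (w0 w1 w2 w3 : ℝ)
    (hw0 : w0 ≠ 0) (hw1 : w1 ≠ 0) (hw2 : w2 ≠ 0) (hw3 : w3 ≠ 0)
    (u0 u1 u2 u3 : ℝ)
    (hu0 : u0 = w0) (hu1 : u1 = 3 * w1) (hu2 : u2 = 3 * w2) (hu3 : u3 = w3)
    (l0 l1 l2 l3 : ℝ)
    (hl0 : l0 = lam c3 c2 c1) (hl1 : l1 = lam c2 c3 c0)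
    (hl2 : l2 = lam c1 c0 c3) (hl3 : l3 = lam c0 c1 c2)
    (hnc0 : l0 ≠ 0) (hnc1 : l1 ≠ 0) (hnc2 : l2 ≠ 0) (hnc3 : l3 ≠ 0)
    (K0 K1 K2 K3 : ℝ → ℝ → ℝ)
    (hK0 : ∀ x y, K0 x y = lineL c0 c1 x y * lineL c1 c2 x y * lineL c2 c3 x y)
    (hK1 : ∀ x y, K1 x y = lineL c0 c1 x y * (lineL c1 c3 x y) ^ 2)
    (hK2 : ∀ x y, K2 x y = (lineL c0 c2 x y) ^ 2 * lineL c2 c3 x y)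
    (hK3 : ∀ x y, K3 x y = (lineL c0 c3 x y) ^ 3)
    (U L b0 b1 b2 b3 : ℝ)
    (hU : U = u0 * u1 * u2 * u3) (hL : L = l0 * l1 * l2 * l3)
    (hb0 : b0 = -(l1 ^ 2 * l2 ^ 2 * U - u1 ^ 2 * u2 ^ 2 * L))
    (hb1 : b1 = l1 ^ 3 * l3 * U - u1 ^ 3 * u3 * L)
    (hb2 : b2 = l0 * l2 ^ 3 * U - u0 * u2 ^ 3 * L)
    (hb3 : b3 = l0 ^ 2 * l3 ^ 2 * U - u0 ^ 2 * u3 ^ 2 * L)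
    (q : ℝ → ℝ → ℝ)
    (hq : ∀ x y, q x y = b0 * K0 x y + b1 * K1 x y + b2 * K2 x y + b3 * K3 x y)
    (phi1 phi2 phi3 : ℝ)
    (hphi1 : phi1 = u0 * u2 * l1 ^ 2 - u1 ^ 2 * l0 * l2)
    (hphi2 : phi2 = u1 * u3 * l2 ^ 2 - u2 ^ 2 * l1 * l3)
    (hphi3 : phi3 = u1 * u2 * l0 * l3 - u0 * u3 * l1 * l2)
    (hphi1ne : phi1 ≠ 0) (hphi2ne : phi2 ≠ 0)
    (S1 S2 : ℝ → ℝ → ℝ)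
    (hS1 : ∀ x y, S1 x y = u2 * phi1 * lineL c0 c2 x y - u1 * phi3 * lineL c0 c3 x y)
    (hS2 : ∀ x y, S2 x y = u1 * phi2 * lineL c1 c3 x y - u2 * phi3 * lineL c0 c3 x y)
    (D' : ℝ) (hD' : D' = phi1 * phi3 * u2 ^ 2 - phi1 * phi2 * u1 * u2 + phi2 ^ 2 * u0 * u1)
    (hD'ne : D' ≠ 0)
    (s : ℝ × ℝ)
    (hs : s = D'⁻¹ • ((phi1 * phi3 * u2 ^ 2) • c0 - (phi1 * phi2 * u1 * u2) • c1 +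
      (phi2 ^ 2 * u0 * u1) • c3)) :
    S1 s.1 s.2 = 0 ∧ S2 s.1 s.2 = 0 ∧ q s.1 s.2 = 0 ∧ grad q s.1 s.2 = (0 : ℝ × ℝ) :=
  double_point_barycentric_c0c1c3_general c0 c1 c2 c3 u0 u1 u2 u3 l0 l1 l2 l3 hl0 hl1 hl2 hl3 hnc2
    K0 K1 K2 K3 hK0 hK1 hK2 hK3 U L b0 b1 b2 b3 hU hL hb0 hb1 hb2 hb3 q hq phi1 phi2 phi3 hphi1
    hphi2 hphi3 S1 S2 hS1 hS2 D' hD' hD'ne s hs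
end
end

section
/- For every t ∈ ℝ with w(t) ≠ 0, one has w(t)·S̃1(p(t)) = λ1·t·r(t). Consequently, if λ1 ≠ 0, then for every t ≠ 0 with w(t) ≠ 0: S̃1(p(t)) = 0 if and only if r(t) = 0; i.e., the parameter values of the double point of the curve are the solutions of the quadratic equation r(t) = 0. -/
noncomputable section

/-!
`L_{ij}` is affine, so clearing the denominator `w(t)` turns `w(t) · L_{ij}(p(t))`
into the linear form `∑ₖ βₖ(t) λ_{kij}` in the homogeneous coordinates of the curve, with
`βₖ(t) = uₖ tᵏ (1-t)^{3-k}`. For `S̃₁` only `β₁, β₂, β₃` survive, and their coefficients are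
`λ₁ t` times the three coefficients of `r` (in that of `β₁` the terms with `λ₀` cancel); the
equivalence follows by cancelling `w(t) λ₁ t`.
-/

theorem lam_self_left (a b : ℝ × ℝ) : lam a a b = 0 := by
  simp only [lam, det3]; ring

theorem lam_self_right (a b : ℝ × ℝ) : lam b a b = 0 := by
  simp only [lam, det3]; ring

theorem lam_swap_left (a b c : ℝ × ℝ) : lam b a c = -lam a b c := by
  simp only [lam, det3]; ring

theorem lam_rotate_s9 (a b c : ℝ × ℝ) : lam a b c = lam b c a := by
  simp only [lam, det3]; ring

theorem mul_lineL_inv_smul (a b q : ℝ × ℝ) {w : ℝ} (hw : w ≠ 0) :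
    w * lineL a b (w⁻¹ • q).1 (w⁻¹ • q).2 =
      q.1 * (a.2 - b.2) - q.2 * (a.1 - b.1) + w * (a.1 * b.2 - a.2 * b.1) := by
  simp only [lineL, det3, Prod.smul_fst, Prod.smul_snd, smul_eq_mul]
  field_simp

theorem mul_lineL_barycenter {ι : Type*} (s : Finset ι) (β : ι → ℝ) (c : ι → ℝ × ℝ)
    (a b : ℝ × ℝ) (hβ : ∑ i ∈ s, β i ≠ 0) :
    (∑ i ∈ s, β i) * lineL a b ((∑ i ∈ s, β i)⁻¹ • ∑ i ∈ s, β i • c i).1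
        ((∑ i ∈ s, β i)⁻¹ • ∑ i ∈ s, β i • c i).2 =
      ∑ i ∈ s, β i * lam (c i) a b := by
  rw [mul_lineL_inv_smul a b _ hβ, Prod.fst_sum, Prod.snd_sum, Finset.sum_mul, Finset.sum_mul,
    Finset.sum_mul, ← Finset.sum_sub_distrib, ← Finset.sum_add_distrib]
  refine Finset.sum_congr rfl fun i _ => ?_
  simp only [lam, det3, Prod.smul_fst, Prod.smul_snd, smul_eq_mul]
  ring

theorem mul_lineL_barycenter_four (a b c0 c1 c2 c3 : ℝ × ℝ) (β0 β1 β2 β3 : ℝ)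
    (hβ : β0 + β1 + β2 + β3 ≠ 0) :
    (β0 + β1 + β2 + β3) *
        lineL a b ((β0 + β1 + β2 + β3)⁻¹ • (β0 • c0 + β1 • c1 + β2 • c2 + β3 • c3)).1
          ((β0 + β1 + β2 + β3)⁻¹ • (β0 • c0 + β1 • c1 + β2 • c2 + β3 • c3)).2 =
      β0 * lam c0 a b + β1 * lam c1 a b + β2 * lam c2 a b + β3 * lam c3 a b := by
  have h := mul_lineL_barycenter Finset.univ ![β0, β1, β2, β3] ![c0, c1, c2, c3] a b
  simp only [Fin.sum_univ_four, Matrix.cons_val] at h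
  exact h hβ

theorem singular_line_parametric_identity_general (c0 c1 c2 c3 : ℝ × ℝ)
    (u0 u1 u2 u3 : ℝ)
    (l0 l1 l2 l3 : ℝ)
    (hl1 : l1 = lam c2 c3 c0)
    (hl2 : l2 = lam c1 c0 c3) (hl3 : l3 = lam c0 c1 c2)
    (phi1 phi2 phi3 : ℝ)
    (hphi1 : phi1 = u0 * u2 * l1 ^ 2 - u1 ^ 2 * l0 * l2)
    (hphi2 : phi2 = u1 * u3 * l2 ^ 2 - u2 ^ 2 * l1 * l3)
    (hphi3 : phi3 = u1 * u2 * l0 * l3 - u0 * u3 * l1 * l2)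
    (P1 P2 P3 : ℝ)
    (hP1 : P1 = phi1 * u2 * u3) (hP2 : P2 = phi2 * u0 * u1) (hP3 : P3 = phi3 * u1 * u2)
    (r : ℝ → ℝ)
    (hr : ∀ t, r t = P1 * t ^ 2 + P3 * (t * (1 - t)) + P2 * (1 - t) ^ 2)
    (S1 : ℝ → ℝ → ℝ)
    (hS1 : ∀ x y, S1 x y = u2 * phi1 * lineL c0 c2 x y - u1 * phi3 * lineL c0 c3 x y)
    (w : ℝ → ℝ) (p : ℝ → ℝ × ℝ)
    (hw : ∀ t, w t = u0 * (1 - t) ^ 3 + u1 * (t * (1 - t) ^ 2) + u2 * (t ^ 2 * (1 - t)) + u3 * t ^ 3)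
    (hp : ∀ t, w t ≠ 0 → p t = (w t)⁻¹ •
      ((u0 * (1 - t) ^ 3) • c0 + (u1 * (t * (1 - t) ^ 2)) • c1 +
        (u2 * (t ^ 2 * (1 - t))) • c2 + (u3 * t ^ 3) • c3)) :
    (∀ t, w t ≠ 0 → w t * S1 (p t).1 (p t).2 = l1 * t * r t) ∧
      (l1 ≠ 0 → ∀ t, t ≠ 0 → w t ≠ 0 → (S1 (p t).1 (p t).2 = 0 ↔ r t = 0)) := by
  have key : ∀ t, w t ≠ 0 → w t * S1 (p t).1 (p t).2 = l1 * t * r t := by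
    intro t ht
    have hL : ∀ a b, w t * lineL a b (p t).1 (p t).2 =
        u0 * (1 - t) ^ 3 * lam c0 a b + u1 * (t * (1 - t) ^ 2) * lam c1 a b +
          u2 * (t ^ 2 * (1 - t)) * lam c2 a b + u3 * t ^ 3 * lam c3 a b := fun a b => by
      rw [hp t ht, hw t]
      exact mul_lineL_barycenter_four a b c0 c1 c2 c3 _ _ _ _ (hw t ▸ ht)
    have h02 : w t * lineL c0 c2 (p t).1 (p t).2 =
        u3 * t ^ 3 * l1 - u1 * (t * (1 - t) ^ 2) * l3 := by
      rw [hL, lam_self_left, lam_self_right, lam_swap_left, ← lam_rotate_s9 c2 c3 c0, ← hl1, ← hl3]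
      ring
    have h03 : w t * lineL c0 c3 (p t).1 (p t).2 =
        u1 * (t * (1 - t) ^ 2) * l2 - u2 * (t ^ 2 * (1 - t)) * l1 := by
      rw [hL, lam_self_left, lam_self_right, lam_swap_left c0 c2 c3, lam_rotate_s9 c0 c2 c3, ← hl1,
        ← hl2]
      ring
    rw [hS1, mul_sub, mul_left_comm (w t), h02, mul_left_comm (w t), h03, hr]
    subst hphi1 hphi2 hphi3 hP1 hP2 hP3
    ring
  refine ⟨key, fun hl1 t ht hwt => ?_⟩
  rw [← mul_right_inj' hwt, key t hwt, mul_zero,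
    mul_eq_zero_iff_left (mul_ne_zero hl1 ht)]

/-- `w(t)·S̃₁(p(t)) = λ₁·t·r(t)`, hence for `λ₁ ≠ 0` and `t ≠ 0` the
double-point parameters are exactly the roots of the quadratic `r`. -/
theorem singular_line_parametric_identity (c0 c1 c2 c3 : ℝ × ℝ) (w0 w1 w2 w3 : ℝ)
    (u0 u1 u2 u3 : ℝ)
    (hu0 : u0 = w0) (hu1 : u1 = 3 * w1) (hu2 : u2 = 3 * w2) (hu3 : u3 = w3)
    (l0 l1 l2 l3 : ℝ)
    (hl0 : l0 = lam c3 c2 c1) (hl1 : l1 = lam c2 c3 c0)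
    (hl2 : l2 = lam c1 c0 c3) (hl3 : l3 = lam c0 c1 c2)
    (phi1 phi2 phi3 : ℝ)
    (hphi1 : phi1 = u0 * u2 * l1 ^ 2 - u1 ^ 2 * l0 * l2)
    (hphi2 : phi2 = u1 * u3 * l2 ^ 2 - u2 ^ 2 * l1 * l3)
    (hphi3 : phi3 = u1 * u2 * l0 * l3 - u0 * u3 * l1 * l2)
    (P1 P2 P3 : ℝ)
    (hP1 : P1 = phi1 * u2 * u3) (hP2 : P2 = phi2 * u0 * u1) (hP3 : P3 = phi3 * u1 * u2)
    (r : ℝ → ℝ)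
    (hr : ∀ t, r t = P1 * t ^ 2 + P3 * (t * (1 - t)) + P2 * (1 - t) ^ 2)
    (S1 S2 : ℝ → ℝ → ℝ)
    (hS1 : ∀ x y, S1 x y = u2 * phi1 * lineL c0 c2 x y - u1 * phi3 * lineL c0 c3 x y)
    (hS2 : ∀ x y, S2 x y = u1 * phi2 * lineL c1 c3 x y - u2 * phi3 * lineL c0 c3 x y)
    (w : ℝ → ℝ) (p : ℝ → ℝ × ℝ)
    (hw : ∀ t, w t = u0 * (1 - t) ^ 3 + u1 * (t * (1 - t) ^ 2) + u2 * (t ^ 2 * (1 - t)) + u3 * t ^ 3)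
    (hp : ∀ t, w t ≠ 0 → p t = (w t)⁻¹ •
      ((u0 * (1 - t) ^ 3) • c0 + (u1 * (t * (1 - t) ^ 2)) • c1 +
        (u2 * (t ^ 2 * (1 - t))) • c2 + (u3 * t ^ 3) • c3)) :
    (∀ t, w t ≠ 0 → w t * S1 (p t).1 (p t).2 = l1 * t * r t) ∧
      (l1 ≠ 0 → ∀ t, t ≠ 0 → w t ≠ 0 → (S1 (p t).1 (p t).2 = 0 ↔ r t = 0)) :=
  singular_line_parametric_identity_general c0 c1 c2 c3 u0 u1 u2 u3 l0 l1 l2 l3 hl1 hl2 hl3 phi1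
    phi2 phi3 hphi1 hphi2 hphi3 P1 P2 P3 hP1 hP2 hP3 r hr S1 hS1 w p hw hp
end
end

section
/- For any control points and weights, and for every t ∈ ℝ with w(t) ≠ 0, the identity w(t)²·q2(p(t)) = t²·(1−t)²·r(t) holds, where q2(x,y) = u0u3·L_{03}(x,y)² − u1u2·L_{01}(x,y)·L_{23}(x,y). -/
noncomputable section

/-!
Each line form `L_{ij}` is affine, so `w(t) · L_{ij}(p(t))` is the Bernstein
combination of its values `L_{ij}(c_k)`, which vanish for `k ∈ {i, j}` and are `± λ_k` otherwise.
Thus `w · L₀₃(p) = u₁t(1−t)²λ₂ − u₂t²(1−t)λ₁`, and similarly for `L₀₁` and `L₂₃`; each of the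
three is divisible by `t(1−t)`, and substituting into `q₂` leaves `t²(1−t)² · r(t)` by a ring identity.
-/

open Finset

theorem mul_lineL_centerMass {ι : Type*} (s : Finset ι) (a : ι → ℝ) (c : ι → ℝ × ℝ)
    (p q : ℝ × ℝ) (ha : ∑ i ∈ s, a i ≠ 0) :
    (∑ i ∈ s, a i) * lineL p q (s.centerMass a c).1 (s.centerMass a c).2 =
      ∑ i ∈ s, a i * lineL p q (c i).1 (c i).2 := by
  simp only [centerMass, lineL, det3, Prod.smul_fst, Prod.smul_snd, Prod.fst_sum,
    Prod.snd_sum, smul_eq_mul, mul_add, mul_sub, sum_add_distrib, sum_sub_distrib,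
    ← mul_assoc, ← sum_mul]
  field_simp

theorem q2_parametric_identity_general (c0 c1 c2 c3 : ℝ × ℝ)
    (u0 u1 u2 u3 : ℝ)
    (l0 l1 l2 l3 : ℝ)
    (hl0 : l0 = lam c3 c2 c1) (hl1 : l1 = lam c2 c3 c0)
    (hl2 : l2 = lam c1 c0 c3) (hl3 : l3 = lam c0 c1 c2)
    (phi1 phi2 phi3 : ℝ)
    (hphi1 : phi1 = u0 * u2 * l1 ^ 2 - u1 ^ 2 * l0 * l2)
    (hphi2 : phi2 = u1 * u3 * l2 ^ 2 - u2 ^ 2 * l1 * l3)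
    (hphi3 : phi3 = u1 * u2 * l0 * l3 - u0 * u3 * l1 * l2)
    (P1 P2 P3 : ℝ)
    (hP1 : P1 = phi1 * u2 * u3) (hP2 : P2 = phi2 * u0 * u1) (hP3 : P3 = phi3 * u1 * u2)
    (r : ℝ → ℝ)
    (hr : ∀ t, r t = P1 * t ^ 2 + P3 * (t * (1 - t)) + P2 * (1 - t) ^ 2)
    (q2 : ℝ → ℝ → ℝ)
    (hq2 : ∀ x y, q2 x y = u0 * u3 * (lineL c0 c3 x y) ^ 2 - u1 * u2 * (lineL c0 c1 x y * lineL c2 c3 x y))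
    (w : ℝ → ℝ) (p : ℝ → ℝ × ℝ)
    (hw : ∀ t, w t = u0 * (1 - t) ^ 3 + u1 * (t * (1 - t) ^ 2) + u2 * (t ^ 2 * (1 - t)) + u3 * t ^ 3)
    (hp : ∀ t, w t ≠ 0 → p t = (w t)⁻¹ •
      ((u0 * (1 - t) ^ 3) • c0 + (u1 * (t * (1 - t) ^ 2)) • c1 +
        (u2 * (t ^ 2 * (1 - t))) • c2 + (u3 * t ^ 3) • c3)) :
    ∀ t, w t ≠ 0 → (w t) ^ 2 * q2 (p t).1 (p t).2 = t ^ 2 * (1 - t) ^ 2 * r t := by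
  intro t ht
  set b : Fin 4 → ℝ :=
    ![u0 * (1 - t) ^ 3, u1 * (t * (1 - t) ^ 2), u2 * (t ^ 2 * (1 - t)), u3 * t ^ 3]
  have hb : ∑ i, b i = w t := by simp [b, Fin.sum_univ_four, hw]
  have hpt : p t = univ.centerMass b ![c0, c1, c2, c3] := by
    simp [hp t ht, centerMass, hb, b, Fin.sum_univ_four]
  have hL (a a' : ℝ × ℝ) : w t * lineL a a' (p t).1 (p t).2 =
      b 0 * lineL a a' c0.1 c0.2 + b 1 * lineL a a' c1.1 c1.2 +
        b 2 * lineL a a' c2.1 c2.2 + b 3 * lineL a a' c3.1 c3.2 := by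
    rw [hpt, ← hb, mul_lineL_centerMass univ b ![c0, c1, c2, c3] a a' (by rwa [hb]),
      Fin.sum_univ_four]
    rfl
  have e03 : w t * lineL c0 c3 (p t).1 (p t).2 = b 1 * l2 - b 2 * l1 := by
    rw [hL, hl1, hl2]; simp only [lineL, lam, det3]; ring
  have e01 : w t * lineL c0 c1 (p t).1 (p t).2 = b 2 * l3 - b 3 * l2 := by
    rw [hL, hl2, hl3]; simp only [lineL, lam, det3]; ring
  have e23 : w t * lineL c2 c3 (p t).1 (p t).2 = b 0 * l1 - b 1 * l0 := by
    rw [hL, hl0, hl1]; simp only [lineL, lam, det3]; ring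
  calc (w t) ^ 2 * q2 (p t).1 (p t).2
      = u0 * u3 * (w t * lineL c0 c3 (p t).1 (p t).2) ^ 2 -
          u1 * u2 * ((w t * lineL c0 c1 (p t).1 (p t).2) * (w t * lineL c2 c3 (p t).1 (p t).2)) := by
        rw [hq2]; ring
    _ = t ^ 2 * (1 - t) ^ 2 * r t := by
        rw [e03, e01, e23, hr, hP1, hP2, hP3, hphi1, hphi2, hphi3]
        simp only [b, Matrix.cons_val_zero, Matrix.cons_val_one, Matrix.cons_val]
        ring

/-- the identity `w(t)²·q₂(p(t)) = t²(1−t)²·r(t)`. -/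
theorem q2_parametric_identity (c0 c1 c2 c3 : ℝ × ℝ) (w0 w1 w2 w3 : ℝ)
    (u0 u1 u2 u3 : ℝ)
    (hu0 : u0 = w0) (hu1 : u1 = 3 * w1) (hu2 : u2 = 3 * w2) (hu3 : u3 = w3)
    (l0 l1 l2 l3 : ℝ)
    (hl0 : l0 = lam c3 c2 c1) (hl1 : l1 = lam c2 c3 c0)
    (hl2 : l2 = lam c1 c0 c3) (hl3 : l3 = lam c0 c1 c2)
    (phi1 phi2 phi3 : ℝ)
    (hphi1 : phi1 = u0 * u2 * l1 ^ 2 - u1 ^ 2 * l0 * l2)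
    (hphi2 : phi2 = u1 * u3 * l2 ^ 2 - u2 ^ 2 * l1 * l3)
    (hphi3 : phi3 = u1 * u2 * l0 * l3 - u0 * u3 * l1 * l2)
    (P1 P2 P3 : ℝ)
    (hP1 : P1 = phi1 * u2 * u3) (hP2 : P2 = phi2 * u0 * u1) (hP3 : P3 = phi3 * u1 * u2)
    (r : ℝ → ℝ)
    (hr : ∀ t, r t = P1 * t ^ 2 + P3 * (t * (1 - t)) + P2 * (1 - t) ^ 2)
    (q2 : ℝ → ℝ → ℝ)
    (hq2 : ∀ x y, q2 x y = u0 * u3 * (lineL c0 c3 x y) ^ 2 - u1 * u2 * (lineL c0 c1 x y * lineL c2 c3 x y))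
    (w : ℝ → ℝ) (p : ℝ → ℝ × ℝ)
    (hw : ∀ t, w t = u0 * (1 - t) ^ 3 + u1 * (t * (1 - t) ^ 2) + u2 * (t ^ 2 * (1 - t)) + u3 * t ^ 3)
    (hp : ∀ t, w t ≠ 0 → p t = (w t)⁻¹ •
      ((u0 * (1 - t) ^ 3) • c0 + (u1 * (t * (1 - t) ^ 2)) • c1 +
        (u2 * (t ^ 2 * (1 - t))) • c2 + (u3 * t ^ 3) • c3)) :
    ∀ t, w t ≠ 0 → (w t) ^ 2 * q2 (p t).1 (p t).2 = t ^ 2 * (1 - t) ^ 2 * r t :=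
  q2_parametric_identity_general c0 c1 c2 c3 u0 u1 u2 u3 l0 l1 l2 l3 hl0 hl1 hl2 hl3 phi1 phi2 phi3
    hphi1 hphi2 hphi3 P1 P2 P3 hP1 hP2 hP3 r hr q2 hq2 w p hw hp
end
end

section
/- Suppose all weights are nonzero (wi ≠ 0 for i = 0,1,2,3) and no three of the control points are collinear (λi ≠ 0 for i = 0,1,2,3). Then the rational cubic Bézier curve degenerates to a conic if and only if φ1 = 0 and φ2 = 0. -/
/-!
In the homogeneous coordinates given by the chord `c0c3` and the end tangents `c0c1`, `c3c2`,
the curve is `[t(1-t)·X' : t²·Y' : (1-t)²·Z']` with `X'`, `Y'`, `Z'` affine in `t`. Comparing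
orders of vanishing at `t = 0` and `t = 1` shows that a conic through the curve lies in the pencil
`a·L₀₃² + e·L₀₁·L₃₂` of conics touching both end tangents at `c0` and `c3`, and such a conic
contains the curve iff the binary quadratic `a·X'² + e·Y'·Z'` vanishes identically. Its three
coefficients are linear in `(a, e)`; they have a common nonzero solution iff `φ₁ = φ₂ = 0`, and then
`(a, e) = (λ₀λ₃, λ₁λ₂)` is one.
-/

noncomputable section

open Matrix MvPolynomial

theorem Continuous.eq_zero_of_eq_zero_off_countable {f : ℝ → ℝ} (hf : Continuous f) {S : Set ℝ}
    (hS : S.Countable) (h : ∀ t ∉ S, f t = 0) : f = 0 :=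
  hf.ext_on (hS.dense_compl ℝ) continuous_const h

theorem Continuous.eq_zero_of_forall_mul_one_sub_mul_eq_zero {g : ℝ → ℝ} (hg : Continuous g)
    (h : ∀ t, t * (1 - t) * g t = 0) (t : ℝ) : g t = 0 := by
  refine congrFun (hg.eq_zero_of_eq_zero_off_countable (Set.toFinite {0, 1}).countable
    fun s hs => ?_) t
  simp only [Set.mem_insert_iff, Set.mem_singleton_iff, not_or] at hs
  exact (mul_eq_zero.1 (h s)).resolve_left (mul_ne_zero hs.1 (sub_ne_zero.2 (Ne.symm hs.2)))

theorem finite_setOf_cubic_bernstein_eq_zero {u0 : ℝ} (hu0 : u0 ≠ 0) (u1 u2 u3 : ℝ) :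
    Set.Finite {t : ℝ |
      u0 * (1 - t) ^ 3 + u1 * (t * (1 - t) ^ 2) + u2 * (t ^ 2 * (1 - t)) + u3 * t ^ 3 = 0} := by
  set W : Polynomial ℝ := .C u0 * (1 - .X) ^ 3 + .C u1 * (.X * (1 - .X) ^ 2) +
    .C u2 * (.X ^ 2 * (1 - .X)) + .C u3 * .X ^ 3
  have hW : W ≠ 0 := fun h => hu0 (by simpa [W] using congrArg (Polynomial.eval 0) h)
  refine (Polynomial.finite_setOfPred_isRoot hW).subset fun t ht => ?_
  simpa [W] using ht

theorem MvPolynomial.exists_eval_eq_dotProduct_mulVec {R : Type*} [CommRing R]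
    {F : MvPolynomial (Fin 2) R} (hF : F.totalDegree ≤ 2) :
    ∃ A : Matrix (Fin 3) (Fin 3) R, ∀ x y, eval ![x, y] F = ![x, y, 1] ⬝ᵥ A *ᵥ ![x, y, 1] := by
  set e : ℕ × ℕ → Fin 2 →₀ ℕ := fun ij => Finsupp.single 0 ij.1 + Finsupp.single 1 ij.2
  have he : Function.Injective e := fun ij kl h =>
    Prod.ext (by simpa [e] using DFunLike.congr_fun h 0) (by simpa [e] using DFunLike.congr_fun h 1)
  have hsupp : F.support ⊆ Finset.image e {(0, 0), (1, 0), (0, 1), (2, 0), (1, 1), (0, 2)} := by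
    intro m hm
    have hdeg : m 0 + m 1 ≤ 2 := by
      simpa [Finsupp.sum_fintype, Fin.sum_univ_two] using (le_totalDegree hm).trans hF
    refine Finset.mem_image.2 ⟨(m 0, m 1), ?_, ?_⟩
    · simp only [Finset.mem_insert, Finset.mem_singleton, Prod.mk.injEq]
      omega
    · ext i
      fin_cases i <;> simp [e]
  refine ⟨!![F.coeff (e (2, 0)), F.coeff (e (1, 1)), F.coeff (e (1, 0));
    0, F.coeff (e (0, 2)), F.coeff (e (0, 1)); 0, 0, F.coeff (e (0, 0))], fun x y => ?_⟩
  rw [eval_eq', Finset.sum_subset hsupp fun m _ hm => by rw [notMem_support_iff.1 hm, zero_mul],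
    Finset.sum_image fun ij _ kl _ h => he h]
  simp [e, Fin.prod_univ_two, dotProduct, mulVec, Fin.sum_univ_three]
  ring

theorem Matrix.exists_dotProduct_mulVec_eq_comp {K n : Type*} [Field K] [Fintype n]
    [DecidableEq n] (A : Matrix n n K) {M : Matrix n n K} (hM : M.det ≠ 0) :
    ∃ B : Matrix n n K, ∀ v, v ⬝ᵥ A *ᵥ v = M *ᵥ v ⬝ᵥ B *ᵥ (M *ᵥ v) := by
  refine ⟨M⁻¹ᵀ * A * M⁻¹, fun v => ?_⟩
  have hMv : M⁻¹ *ᵥ (M *ᵥ v) = v := by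
    rw [mulVec_mulVec, nonsing_inv_mul _ (isUnit_iff_ne_zero.2 hM), one_mulVec]
  rw [← mulVec_mulVec, ← mulVec_mulVec, hMv, dotProduct_mulVec (M *ᵥ v), vecMul_transpose, hMv]

def ternaryQuad (a b c d e f X Y Z : ℝ) : ℝ :=
  a * X ^ 2 + b * X * Y + c * Y ^ 2 + d * X * Z + e * Y * Z + f * Z ^ 2

theorem ternaryQuad_mul (a b c d e f s X Y Z : ℝ) :
    ternaryQuad a b c d e f (s * X) (s * Y) (s * Z) = s ^ 2 * ternaryQuad a b c d e f X Y Z := by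
  unfold ternaryQuad
  ring

theorem Matrix.dotProduct_mulVec_fin_three (B : Matrix (Fin 3) (Fin 3) ℝ) (v : Fin 3 → ℝ) :
    v ⬝ᵥ B *ᵥ v = ternaryQuad (B 0 0) (B 0 1 + B 1 0) (B 1 1) (B 0 2 + B 2 0) (B 1 2 + B 2 1)
      (B 2 2) (v 0) (v 1) (v 2) := by
  simp only [ternaryQuad, dotProduct, mulVec, Fin.sum_univ_three]
  ring

theorem MvPolynomial.exists_ternaryQuad_eval_eq {F : MvPolynomial (Fin 2) ℝ}
    (hF2 : F.totalDegree ≤ 2) (hF0 : F ≠ 0) {ℓ₁ ℓ₂ ℓ₃ : Fin 3 → ℝ}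
    (hℓ : (of ![ℓ₁, ℓ₂, ℓ₃]).det ≠ 0) :
    ∃ a b c d e f : ℝ, ¬(a = 0 ∧ b = 0 ∧ c = 0 ∧ d = 0 ∧ e = 0 ∧ f = 0) ∧ ∀ x y,
      eval ![x, y] F = ternaryQuad a b c d e f
        (ℓ₁ ⬝ᵥ ![x, y, 1]) (ℓ₂ ⬝ᵥ ![x, y, 1]) (ℓ₃ ⬝ᵥ ![x, y, 1]) := by
  obtain ⟨A, hA⟩ := exists_eval_eq_dotProduct_mulVec hF2
  obtain ⟨B, hB⟩ := exists_dotProduct_mulVec_eq_comp A hℓ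
  have hF : ∀ x y, eval ![x, y] F = ternaryQuad (B 0 0) (B 0 1 + B 1 0) (B 1 1)
      (B 0 2 + B 2 0) (B 1 2 + B 2 1) (B 2 2)
      (ℓ₁ ⬝ᵥ ![x, y, 1]) (ℓ₂ ⬝ᵥ ![x, y, 1]) (ℓ₃ ⬝ᵥ ![x, y, 1]) := fun x y => by
    rw [hA, hB, dotProduct_mulVec_fin_three]
    rfl
  refine ⟨_, _, _, _, _, _, fun h0 => hF0 (MvPolynomial.funext fun v => ?_), hF⟩
  obtain ⟨ha, hb, hc, hd, he, hf⟩ := h0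
  have hv : v = ![v 0, v 1] := by
    ext i
    fin_cases i <;> rfl
  rw [hv, hF, ha, hb, hc, hd, he, hf]
  simp [ternaryQuad]

def lineCoeffs (q r : ℝ × ℝ) : Fin 3 → ℝ := ![q.2 - r.2, r.1 - q.1, q.1 * r.2 - q.2 * r.1]

theorem lineCoeffs_dotProduct (q r : ℝ × ℝ) (x y : ℝ) :
    lineCoeffs q r ⬝ᵥ ![x, y, 1] = lineL q r x y := by
  simp only [dotProduct, lineCoeffs, Fin.sum_univ_three, cons_val_zero, cons_val_one, cons_val,
    mul_one, lineL, det3]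
  ring

theorem det_lineCoeffs (q r s t : ℝ × ℝ) :
    (of ![lineCoeffs q r, lineCoeffs q s, lineCoeffs r t]).det = lam q r s * lam q r t := by
  simp only [det_fin_three, lineCoeffs, of_apply, cons_val', cons_val_zero, cons_val_one, cons_val,
    cons_val_fin_one, lam, det3]
  ring

def linePoly (q r : ℝ × ℝ) : MvPolynomial (Fin 2) ℝ :=
  C (q.2 - r.2) * X 0 + C (r.1 - q.1) * X 1 + C (q.1 * r.2 - q.2 * r.1)

@[simp]
theorem eval_linePoly (q r : ℝ × ℝ) (x y : ℝ) : eval ![x, y] (linePoly q r) = lineL q r x y := by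
  simp only [linePoly, map_add, map_mul, eval_C, eval_X, cons_val_zero, cons_val_one, lineL, det3]
  ring

theorem totalDegree_linePoly_le (q r : ℝ × ℝ) : (linePoly q r).totalDegree ≤ 1 := by
  refine (totalDegree_add _ _).trans
    (max_le ((totalDegree_add _ _).trans (max_le ?_ ?_)) ((totalDegree_C _).trans_le zero_le_one))
  all_goals exact (totalDegree_mul _ _).trans (by rw [totalDegree_C, totalDegree_X])

theorem mul_lineL_of_eq_smul {W : ℝ} {P c0 c1 c2 c3 : ℝ × ℝ} {a0 a1 a2 a3 : ℝ} (hW : W ≠ 0)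
    (hWa : W = a0 + a1 + a2 + a3) (hP : P = W⁻¹ • (a0 • c0 + a1 • c1 + a2 • c2 + a3 • c3))
    (q r : ℝ × ℝ) :
    W * lineL q r P.1 P.2 =
      a0 * lam c0 q r + a1 * lam c1 q r + a2 * lam c2 q r + a3 * lam c3 q r := by
  have hx : W * P.1 = a0 * c0.1 + a1 * c1.1 + a2 * c2.1 + a3 * c3.1 := by
    simp only [hP, Prod.smul_fst, Prod.fst_add, smul_eq_mul, mul_inv_cancel_left₀ hW]
  have hy : W * P.2 = a0 * c0.2 + a1 * c1.2 + a2 * c2.2 + a3 * c3.2 := by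
    simp only [hP, Prod.smul_snd, Prod.snd_add, smul_eq_mul, mul_inv_cancel_left₀ hW]
  simp only [lineL, lam, det3]
  linear_combination (q.2 - r.2) * hx - (q.1 - r.1) * hy + (q.1 * r.2 - q.2 * r.1) * hWa

-- Comparing orders of vanishing at `t = 0` and `t = 1` peels off `f` and `c`, then `d` and `b`.
theorem pencil_of_ternaryQuad_eq_zero_on_curve {X' Y' Z' : ℝ → ℝ} {S : Set ℝ} {a b c d e f : ℝ}
    (hX' : Continuous X') (hY' : Continuous Y') (hZ' : Continuous Z')
    (hX0 : X' 0 ≠ 0) (hX1 : X' 1 ≠ 0) (hY1 : Y' 1 ≠ 0) (hZ0 : Z' 0 ≠ 0) (hS : S.Countable)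
    (h : ∀ t ∉ S,
      ternaryQuad a b c d e f (t * (1 - t) * X' t) (t ^ 2 * Y' t) ((1 - t) ^ 2 * Z' t) = 0) :
    b = 0 ∧ c = 0 ∧ d = 0 ∧ f = 0 ∧ ∀ t, a * X' t ^ 2 + e * Y' t * Z' t = 0 := by
  have h₀ : ∀ t, ternaryQuad a b c d e f (t * (1 - t) * X' t) (t ^ 2 * Y' t)
      ((1 - t) ^ 2 * Z' t) = 0 :=
    congrFun <| (by unfold ternaryQuad; fun_prop : Continuous _).eq_zero_of_eq_zero_off_countable
      hS h
  have hf : f = 0 := by simpa [ternaryQuad, hZ0] using h₀ 0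
  have hc : c = 0 := by simpa [ternaryQuad, hY1] using h₀ 1
  subst hf hc
  have h₁ := Continuous.eq_zero_of_forall_mul_one_sub_mul_eq_zero (g := fun t =>
      a * (t * (1 - t)) * X' t ^ 2 + b * t ^ 2 * X' t * Y' t + d * (1 - t) ^ 2 * X' t * Z' t +
        e * (t * (1 - t)) * Y' t * Z' t) (by fun_prop) fun t => by
    have := h₀ t
    unfold ternaryQuad at this
    linear_combination this
  have hd : d = 0 := by simpa [hX0, hZ0] using h₁ 0
  have hb : b = 0 := by simpa [hX1, hY1] using h₁ 1
  subst hd hb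
  refine ⟨rfl, rfl, rfl, rfl,
    Continuous.eq_zero_of_forall_mul_one_sub_mul_eq_zero (by fun_prop) fun t => ?_⟩
  linear_combination h₁ t

theorem exists_pencil_of_conic {c0 c1 c2 c3 : ℝ × ℝ} (h₁ : lam c1 c0 c3 ≠ 0)
    (h₂ : lam c2 c3 c0 ≠ 0) {q : ℝ → ℝ × ℝ} {W X' Y' Z' : ℝ → ℝ}
    (hX : ∀ t, W t ≠ 0 → W t * lineL c0 c3 (q t).1 (q t).2 = t * (1 - t) * X' t)
    (hY : ∀ t, W t ≠ 0 → W t * lineL c0 c1 (q t).1 (q t).2 = t ^ 2 * Y' t)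
    (hZ : ∀ t, W t ≠ 0 → W t * lineL c3 c2 (q t).1 (q t).2 = (1 - t) ^ 2 * Z' t)
    (hW : {t | W t = 0}.Countable) (hX' : Continuous X') (hY' : Continuous Y')
    (hZ' : Continuous Z') (hX0 : X' 0 ≠ 0) (hX1 : X' 1 ≠ 0) (hY1 : Y' 1 ≠ 0) (hZ0 : Z' 0 ≠ 0)
    {F : MvPolynomial (Fin 2) ℝ} (hF0 : F ≠ 0) (hF2 : F.totalDegree ≤ 2)
    (hFq : ∀ t, W t ≠ 0 → eval ![(q t).1, (q t).2] F = 0) :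
    ∃ a e : ℝ, (a ≠ 0 ∨ e ≠ 0) ∧ ∀ t, a * X' t ^ 2 + e * Y' t * Z' t = 0 := by
  have hdet : (of ![lineCoeffs c0 c3, lineCoeffs c0 c1, lineCoeffs c3 c2]).det =
      -(lam c1 c0 c3 * lam c2 c3 c0) := by
    rw [det_lineCoeffs]; unfold lam det3; ring
  obtain ⟨a, b, c, d, e, f, hne, hF⟩ := exists_ternaryQuad_eval_eq hF2 hF0
    (hdet ▸ neg_ne_zero.2 (mul_ne_zero h₁ h₂))
  have hcurve : ∀ t ∉ {t | W t = 0},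
      ternaryQuad a b c d e f (t * (1 - t) * X' t) (t ^ 2 * Y' t) ((1 - t) ^ 2 * Z' t) = 0 := by
    intro t (ht : W t ≠ 0)
    rw [← hX t ht, ← hY t ht, ← hZ t ht, ternaryQuad_mul, ← lineCoeffs_dotProduct,
      ← lineCoeffs_dotProduct, ← lineCoeffs_dotProduct, ← hF, hFq t ht, mul_zero]
  obtain ⟨rfl, rfl, rfl, rfl, hpencil⟩ :=
    pencil_of_ternaryQuad_eq_zero_on_curve hX' hY' hZ' hX0 hX1 hY1 hZ0 hW hcurve
  exact ⟨a, e, by tauto, hpencil⟩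

-- The conics touching the line `c0c1` at `c0` and the line `c3c2` at `c3`.
def chordTangentPencil (c0 c1 c2 c3 : ℝ × ℝ) (α β : ℝ) : MvPolynomial (Fin 2) ℝ :=
  C α * linePoly c0 c3 ^ 2 + C β * (linePoly c0 c1 * linePoly c3 c2)

theorem totalDegree_chordTangentPencil_le (c0 c1 c2 c3 : ℝ × ℝ) (α β : ℝ) :
    (chordTangentPencil c0 c1 c2 c3 α β).totalDegree ≤ 2 := by
  have h03 := totalDegree_linePoly_le c0 c3
  have h01 := totalDegree_linePoly_le c0 c1
  have h32 := totalDegree_linePoly_le c3 c2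
  refine (totalDegree_add _ _).trans (max_le ?_ ?_) <;> refine (totalDegree_mul _ _).trans ?_ <;>
    rw [totalDegree_C, zero_add]
  · exact (totalDegree_pow _ _).trans (by omega)
  · exact (totalDegree_mul _ _).trans (by omega)

theorem chordTangentPencil_ne_zero {c0 c1 c2 c3 : ℝ × ℝ} (h : lam c1 c0 c3 ≠ 0) {α : ℝ}
    (hα : α ≠ 0) (β : ℝ) : chordTangentPencil c0 c1 c2 c3 α β ≠ 0 := by
  intro h0
  have h01 : lineL c0 c1 c1.1 c1.2 = 0 := by unfold lineL det3; ring
  have := congrArg (eval ![c1.1, c1.2]) h0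
  simp only [chordTangentPencil, map_add, map_mul, map_pow, eval_C, eval_linePoly, h01, mul_zero,
    zero_mul, add_zero, map_zero] at this
  exact mul_ne_zero hα (pow_ne_zero 2 h) this

theorem eval_chordTangentPencil_eq_zero {c0 c1 c2 c3 : ℝ × ℝ} {q : ℝ → ℝ × ℝ}
    {W X' Y' Z' : ℝ → ℝ} {α β : ℝ}
    (hX : ∀ t, W t ≠ 0 → W t * lineL c0 c3 (q t).1 (q t).2 = t * (1 - t) * X' t)
    (hY : ∀ t, W t ≠ 0 → W t * lineL c0 c1 (q t).1 (q t).2 = t ^ 2 * Y' t)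
    (hZ : ∀ t, W t ≠ 0 → W t * lineL c3 c2 (q t).1 (q t).2 = (1 - t) ^ 2 * Z' t)
    (h : ∀ t, α * X' t ^ 2 + β * Y' t * Z' t = 0) (t : ℝ) (ht : W t ≠ 0) :
    eval ![(q t).1, (q t).2] (chordTangentPencil c0 c1 c2 c3 α β) = 0 := by
  refine (mul_eq_zero.1 ?_).resolve_left (pow_ne_zero 2 ht)
  simp only [chordTangentPencil, map_add, map_mul, map_pow, eval_C, eval_linePoly]
  linear_combination α * (W t * lineL c0 c3 (q t).1 (q t).2 + t * (1 - t) * X' t) * hX t ht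
    + β * W t * lineL c0 c1 (q t).1 (q t).2 * hZ t ht + β * (1 - t) ^ 2 * Z' t * hY t ht
    + t ^ 2 * (1 - t) ^ 2 * h t

theorem phi_eq_zero_of_pencil {u0 u1 u2 u3 l0 l1 l2 l3 a e : ℝ} (hu1 : u1 ≠ 0) (hu2 : u2 ≠ 0)
    (hl0 : l0 ≠ 0) (hl2 : l2 ≠ 0) (hl3 : l3 ≠ 0) (hae : a ≠ 0 ∨ e ≠ 0)
    (h : ∀ t, a * (u1 * l2 * (1 - t) - u2 * l1 * t) ^ 2 +
      e * (u2 * l3 * (1 - t) - u3 * l2 * t) * (u1 * l0 * t - u0 * l1 * (1 - t)) = 0) :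
    u0 * u2 * l1 ^ 2 - u1 ^ 2 * l0 * l2 = 0 ∧ u1 * u3 * l2 ^ 2 - u2 ^ 2 * l1 * l3 = 0 := by
  have hA : a * (u1 ^ 2 * l2 ^ 2) = e * (u0 * u2 * l1 * l3) := by linear_combination h 0
  have hB : a * (u2 ^ 2 * l1 ^ 2) = e * (u1 * u3 * l0 * l2) := by linear_combination h 1
  have hC : 2 * a * (u1 * u2 * l1 * l2) = e * (u1 * u2 * l0 * l3 + u0 * u3 * l1 * l2) := by
    linear_combination -4 * h (1 / 2) + hA + hB
  have he : e ≠ 0 := by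
    rintro rfl
    have ha : a = 0 := by simpa [hu1, hl2] using hA
    simp [ha] at hae
  have hφ₃ : u1 * u2 * l0 * l3 - u0 * u3 * l1 * l2 = 0 := by
    -- `hC` squared and the product of `hA` and `hB` have equal left-hand sides.
    have : (e * (u1 * u2 * l0 * l3 - u0 * u3 * l1 * l2)) ^ 2 = 0 := by
      linear_combination
        -(e * (u1 * u2 * l0 * l3 + u0 * u3 * l1 * l2) + 2 * a * (u1 * u2 * l1 * l2)) * hC
          + 4 * a * (u2 ^ 2 * l1 ^ 2) * hA + 4 * e * (u0 * u2 * l1 * l3) * hB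
    simpa [he] using this
  have hae' : a * l1 * l2 = e * l0 * l3 := by
    have : u1 * u2 * (a * l1 * l2 - e * l0 * l3) = 0 := by
      linear_combination hC / 2 - e / 2 * hφ₃
    linear_combination (mul_eq_zero.1 this).resolve_left (mul_ne_zero hu1 hu2)
  constructor
  · have : e * l3 * (u0 * u2 * l1 ^ 2 - u1 ^ 2 * l0 * l2) = 0 := by
      linear_combination -l1 * hA + u1 ^ 2 * l2 * hae'
    simpa [he, hl3] using this
  · have : e * l0 * (u1 * u3 * l2 ^ 2 - u2 ^ 2 * l1 * l3) = 0 := by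
      linear_combination -l2 * hB + u2 ^ 2 * l1 * hae'
    simpa [he, hl0] using this

theorem pencil_eq_zero_of_phi_eq_zero {u0 u1 u2 u3 l0 l1 l2 l3 : ℝ} (hu1 : u1 ≠ 0) (hu2 : u2 ≠ 0)
    (hl1 : l1 ≠ 0) (hl2 : l2 ≠ 0) (hφ₁ : u0 * u2 * l1 ^ 2 - u1 ^ 2 * l0 * l2 = 0)
    (hφ₂ : u1 * u3 * l2 ^ 2 - u2 ^ 2 * l1 * l3 = 0) (t : ℝ) :
    l0 * l3 * (u1 * l2 * (1 - t) - u2 * l1 * t) ^ 2 +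
      l1 * l2 * (u2 * l3 * (1 - t) - u3 * l2 * t) * (u1 * l0 * t - u0 * l1 * (1 - t)) = 0 := by
  have hφ₃ : u1 * u2 * l0 * l3 - u0 * u3 * l1 * l2 = 0 := by
    have : u1 * u2 * l1 * l2 * (u1 * u2 * l0 * l3 - u0 * u3 * l1 * l2) = 0 := by
      linear_combination -(u1 * u3 * l2 ^ 2) * hφ₁ - u1 ^ 2 * l0 * l2 * hφ₂
    simpa [hu1, hu2, hl1, hl2] using this
  linear_combination -(l2 * l3 * (1 - t) ^ 2) * hφ₁ - l1 * l2 * (1 - t) * t * hφ₃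
    - l0 * l1 * t ^ 2 * hφ₂

theorem degenerates_to_conic_iff_general (c0 c1 c2 c3 : ℝ × ℝ) (w0 w1 w2 w3 : ℝ)
    (hw0 : w0 ≠ 0) (hw1 : w1 ≠ 0) (hw2 : w2 ≠ 0) (hw3 : w3 ≠ 0)
    (u0 u1 u2 u3 : ℝ)
    (hu0 : u0 = w0) (hu1 : u1 = 3 * w1) (hu2 : u2 = 3 * w2) (hu3 : u3 = w3)
    (l0 l1 l2 l3 : ℝ)
    (hl0 : l0 = lam c3 c2 c1) (hl1 : l1 = lam c2 c3 c0)
    (hl2 : l2 = lam c1 c0 c3) (hl3 : l3 = lam c0 c1 c2)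
    (hnc0 : l0 ≠ 0) (hnc1 : l1 ≠ 0) (hnc2 : l2 ≠ 0) (hnc3 : l3 ≠ 0)
    (phi1 phi2 : ℝ)
    (hphi1 : phi1 = u0 * u2 * l1 ^ 2 - u1 ^ 2 * l0 * l2)
    (hphi2 : phi2 = u1 * u3 * l2 ^ 2 - u2 ^ 2 * l1 * l3)
    (w : ℝ → ℝ) (p : ℝ → ℝ × ℝ)
    (hw : ∀ t, w t = u0 * (1 - t) ^ 3 + u1 * (t * (1 - t) ^ 2) + u2 * (t ^ 2 * (1 - t)) + u3 * t ^ 3)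
    (hp : ∀ t, w t ≠ 0 → p t = (w t)⁻¹ •
      ((u0 * (1 - t) ^ 3) • c0 + (u1 * (t * (1 - t) ^ 2)) • c1 +
        (u2 * (t ^ 2 * (1 - t))) • c2 + (u3 * t ^ 3) • c3)) :
    (∃ F : MvPolynomial (Fin 2) ℝ, F ≠ 0 ∧ F.totalDegree ≤ 2 ∧
        ∀ t, w t ≠ 0 → MvPolynomial.eval ![(p t).1, (p t).2] F = 0) ↔
      (phi1 = 0 ∧ phi2 = 0) := by
  obtain ⟨hu0', hu1', hu2', hu3'⟩ : u0 ≠ 0 ∧ u1 ≠ 0 ∧ u2 ≠ 0 ∧ u3 ≠ 0 :=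
    ⟨hu0 ▸ hw0, hu1 ▸ mul_ne_zero three_ne_zero hw1, hu2 ▸ mul_ne_zero three_ne_zero hw2, hu3 ▸ hw3⟩
  have hL := fun t (ht : w t ≠ 0) => mul_lineL_of_eq_smul ht (hw t) (hp t ht)
  have hX : ∀ t, w t ≠ 0 → w t * lineL c0 c3 (p t).1 (p t).2 =
      t * (1 - t) * (u1 * l2 * (1 - t) - u2 * l1 * t) := fun t ht => by
    rw [hL t ht, hl1, hl2]; unfold lam det3; ring
  have hY : ∀ t, w t ≠ 0 → w t * lineL c0 c1 (p t).1 (p t).2 =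
      t ^ 2 * (u2 * l3 * (1 - t) - u3 * l2 * t) := fun t ht => by
    rw [hL t ht, hl2, hl3]; unfold lam det3; ring
  have hZ : ∀ t, w t ≠ 0 → w t * lineL c3 c2 (p t).1 (p t).2 =
      (1 - t) ^ 2 * (u1 * l0 * t - u0 * l1 * (1 - t)) := fun t ht => by
    rw [hL t ht, hl0, hl1]; unfold lam det3; ring
  subst hphi1 hphi2
  constructor
  · rintro ⟨F, hF0, hF2, hFp⟩
    obtain ⟨a, e, hae, h⟩ := exists_pencil_of_conic (hl2 ▸ hnc2) (hl1 ▸ hnc1) hX hY hZ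
      (by simpa only [hw] using (finite_setOf_cubic_bernstein_eq_zero hu0' u1 u2 u3).countable)
      (by fun_prop) (by fun_prop) (by fun_prop) (by simp [hu1', hnc2]) (by simp [hu2', hnc1])
      (by simp [hu3', hnc2]) (by simp [hu0', hnc1]) hF0 hF2 hFp
    exact phi_eq_zero_of_pencil hu1' hu2' hnc0 hnc2 hnc3 hae h
  · rintro ⟨hφ₁, hφ₂⟩
    exact ⟨_, chordTangentPencil_ne_zero (hl2 ▸ hnc2) (mul_ne_zero hnc0 hnc3) (l1 * l2),
      totalDegree_chordTangentPencil_le _ _ _ _ _ _, eval_chordTangentPencil_eq_zero hX hY hZ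
        (pencil_eq_zero_of_phi_eq_zero hu1' hu2' hnc1 hnc2 hφ₁ hφ₂)⟩

/-- the rational cubic Bézier curve degenerates to a conic iff
`φ₁ = 0` and `φ₂ = 0`. -/
theorem degenerates_to_conic_iff (c0 c1 c2 c3 : ℝ × ℝ) (w0 w1 w2 w3 : ℝ)
    (hw0 : w0 ≠ 0) (hw1 : w1 ≠ 0) (hw2 : w2 ≠ 0) (hw3 : w3 ≠ 0)
    (u0 u1 u2 u3 : ℝ)
    (hu0 : u0 = w0) (hu1 : u1 = 3 * w1) (hu2 : u2 = 3 * w2) (hu3 : u3 = w3)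
    (l0 l1 l2 l3 : ℝ)
    (hl0 : l0 = lam c3 c2 c1) (hl1 : l1 = lam c2 c3 c0)
    (hl2 : l2 = lam c1 c0 c3) (hl3 : l3 = lam c0 c1 c2)
    (hnc0 : l0 ≠ 0) (hnc1 : l1 ≠ 0) (hnc2 : l2 ≠ 0) (hnc3 : l3 ≠ 0)
    (phi1 phi2 phi3 : ℝ)
    (hphi1 : phi1 = u0 * u2 * l1 ^ 2 - u1 ^ 2 * l0 * l2)
    (hphi2 : phi2 = u1 * u3 * l2 ^ 2 - u2 ^ 2 * l1 * l3)
    (hphi3 : phi3 = u1 * u2 * l0 * l3 - u0 * u3 * l1 * l2)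
    (w : ℝ → ℝ) (p : ℝ → ℝ × ℝ)
    (hw : ∀ t, w t = u0 * (1 - t) ^ 3 + u1 * (t * (1 - t) ^ 2) + u2 * (t ^ 2 * (1 - t)) + u3 * t ^ 3)
    (hp : ∀ t, w t ≠ 0 → p t = (w t)⁻¹ •
      ((u0 * (1 - t) ^ 3) • c0 + (u1 * (t * (1 - t) ^ 2)) • c1 +
        (u2 * (t ^ 2 * (1 - t))) • c2 + (u3 * t ^ 3) • c3)) :
    (∃ F : MvPolynomial (Fin 2) ℝ, F ≠ 0 ∧ F.totalDegree ≤ 2 ∧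
        ∀ t, w t ≠ 0 → MvPolynomial.eval ![(p t).1, (p t).2] F = 0) ↔
      (phi1 = 0 ∧ phi2 = 0) :=
  degenerates_to_conic_iff_general c0 c1 c2 c3 w0 w1 w2 w3 hw0 hw1 hw2 hw3 u0 u1 u2 u3 hu0 hu1 hu2
    hu3 l0 l1 l2 l3 hl0 hl1 hl2 hl3 hnc0 hnc1 hnc2 hnc3 phi1 phi2 hphi1 hphi2 w p hw hp
end
end

section
/- Suppose all weights are nonzero (wi ≠ 0 for i = 0,1,2,3) and no three of the control points are collinear (λi ≠ 0 for i = 0,1,2,3). Then the following three statements are equivalent: (1) the rational cubic Bézier curve degenerates to a conic; (2) the coefficients b0, b1, b2, b3 are all zero; (3) the polynomial q is identically zero. -/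
/-!
Write points in unnormalised barycentric coordinates `(L₁₂, L₂₀, L₀₁)` with respect to the
triangle `c₀ c₁ c₂`. Multiplied by `w t`, the curve becomes `baryCubic α β γ δ₀ δ₁ δ₂ t`, with
`α, β, γ = u₀λ₃, u₁λ₃, u₂λ₃` and `δᵢ = u₃λᵢ`, and a conic through the curve becomes a ternary
quadratic form vanishing on this cubic parametrisation. Comparing the seven Bernstein
coefficients shows that a nonzero such form exists iff `β δ₂² = γ² δ₁` and `γ³ δ₀ = α δ₂³`, i.e.
`δ₁ = β r²` and `δ₀ = α r³` for `r = δ₂ / γ`: exactly when the three coordinates share the linear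
factor `(1 - t) - r t`. These two relations are equivalent to `b₀ = b₁ = b₂ = b₃ = 0`.

Conversely, `q ≡ 0` forces every `bᵢ` to vanish: on the line `c₁ c₂` the form `K₀` vanishes and
`K₁, K₂, K₃` are cubes of linear forms vanishing at `c₁`, at `c₂` and on the line `c₀ c₃`, so the
Bernstein coefficients of the restriction give `b₁ = b₂ = b₃ = 0`, and one further point gives
`b₀ = 0`.
-/

noncomputable section

section Polynomials

open Polynomial

variable {K : Type*} [Field K] [Infinite K]

theorem eq_zero_of_infinite_setOf_sum_bernstein_eq_zero {n : ℕ} {e : Fin (n + 1) → K}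
    (h : {t : K | ∑ k : Fin (n + 1), e k * (1 - t) ^ (n - k : ℕ) * t ^ (k : ℕ) = 0}.Infinite) :
    e = 0 := by
  set P : K[X] := ∑ k : Fin (n + 1), C (e k) * (1 - X) ^ (n - k : ℕ) * X ^ (k : ℕ)
  have hP : P = 0 := eq_zero_of_infinite_isRoot P (by simpa [P, eval_finsetSum] using h)
  set R : K[X] := ∑ k : Fin (n + 1), C (e k) * X ^ (k : ℕ)
  have hR : R = 0 := by
    refine eq_zero_of_infinite_isRoot R ((Set.finite_singleton (-1 : K)).infinite_compl.mono ?_)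
    intro s (hs : s ≠ -1)
    have hs' : 1 + s ≠ 0 := fun h => hs (by linear_combination h)
    -- the substitution `t = s / (1 + s)` turns `(1 - t, t)` into `(1, s) / (1 + s)`
    have key : R.eval s = (1 + s) ^ n * P.eval (s / (1 + s)) := by
      simp only [R, P, eval_finsetSum, Finset.mul_sum, eval_mul, eval_C, eval_pow, eval_sub,
        eval_one, eval_X]
      refine Finset.sum_congr rfl fun k _ => ?_
      rw [← pow_sub_mul_pow (1 + s) (Nat.lt_succ_iff.mp k.isLt),
        show 1 - s / (1 + s) = (1 + s)⁻¹ by field_simp; ring, div_eq_mul_inv, mul_pow, inv_pow,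
        inv_pow]
      field_simp
    simp [IsRoot, key, hP]
  ext k
  simpa [R, finsetSum_coeff, coeff_C_mul_X_pow, Fin.val_inj] using congrArg (coeff · k) hR

theorem infinite_setOf_bezierWeight_ne_zero {u₀ : K} (hu₀ : u₀ ≠ 0) (u₁ u₂ u₃ : K) :
    {t : K | u₀ * (1 - t) ^ 3 + u₁ * (t * (1 - t) ^ 2) + u₂ * (t ^ 2 * (1 - t)) + u₃ * t ^ 3 ≠ 0}
      |>.Infinite := by
  let W : K[X] := C u₀ * (1 - X) ^ 3 + C u₁ * (X * (1 - X) ^ 2) + C u₂ * (X ^ 2 * (1 - X))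
    + C u₃ * X ^ 3
  have hW : W ≠ 0 := fun h => hu₀ (by simpa [W] using congrArg (eval 0) h)
  refine (finite_setOfPred_isRoot hW).infinite_compl.mono fun t ht => ?_
  simpa [W] using ht

end Polynomials

theorem QuadraticMap.apply_fin_three {R : Type*} [CommRing R] (Q : QuadraticForm R (Fin 3 → R))
    (v : Fin 3 → R) :
    Q v = v 0 ^ 2 * Q (Pi.single 0 1) + v 1 ^ 2 * Q (Pi.single 1 1) + v 2 ^ 2 * Q (Pi.single 2 1)
      + v 0 * v 1 * polar Q (Pi.single 0 1) (Pi.single 1 1)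
      + v 0 * v 2 * polar Q (Pi.single 0 1) (Pi.single 2 1)
      + v 1 * v 2 * polar Q (Pi.single 1 1) (Pi.single 2 1) := by
  have hv : v = v 0 • Pi.single 0 1 + v 1 • Pi.single 1 1 + v 2 • Pi.single 2 1 := by
    ext i; fin_cases i <;> simp
  conv_lhs => rw [hv]
  simp only [QuadraticMap.map_add Q, QuadraticMap.map_smul, polar_add_left, polar_smul_left,
    polar_smul_right, smul_eq_mul]
  ring

theorem QuadraticMap.eq_zero_of_fin_three {R : Type*} [CommRing R]
    {Q : QuadraticForm R (Fin 3 → R)} (h₀ : Q (Pi.single 0 1) = 0) (h₁ : Q (Pi.single 1 1) = 0)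
    (h₂ : Q (Pi.single 2 1) = 0) (h₀₁ : polar Q (Pi.single 0 1) (Pi.single 1 1) = 0)
    (h₀₂ : polar Q (Pi.single 0 1) (Pi.single 2 1) = 0)
    (h₁₂ : polar Q (Pi.single 1 1) (Pi.single 2 1) = 0) : Q = 0 :=
  QuadraticMap.ext fun v => by simp [apply_fin_three, h₀, h₁, h₂, h₀₁, h₀₂, h₁₂]

namespace MvPolynomial

theorem exists_eval_eq_of_totalDegree_le_two {R : Type*} [CommSemiring R]
    {F : MvPolynomial (Fin 2) R} (hF : F.totalDegree ≤ 2) :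
    ∃ a b c d e f : R, ∀ x y : R,
      eval ![x, y] F = a * x ^ 2 + b * (x * y) + c * y ^ 2 + d * x + e * y + f := by
  let m : ℕ × ℕ → Fin 2 →₀ ℕ := fun ij => Finsupp.single 0 ij.1 + Finsupp.single 1 ij.2
  have hm : Function.Injective m := fun ij kl h =>
    Prod.ext (by simpa [m] using DFunLike.congr_fun h 0) (by simpa [m] using DFunLike.congr_fun h 1)
  let S : Finset (ℕ × ℕ) := {(2, 0), (1, 1), (0, 2), (1, 0), (0, 1), (0, 0)}
  have hsupp : F.support ⊆ S.image m := by
    intro d hd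
    have hdeg : d 0 + d 1 ≤ 2 := by
      simpa [Finsupp.sum_fintype, Fin.sum_univ_two] using (le_totalDegree hd).trans hF
    refine Finset.mem_image.mpr ⟨(d 0, d 1), ?_, ?_⟩
    · simp only [S, Finset.mem_insert, Finset.mem_singleton, Prod.mk.injEq]
      omega
    · ext i; fin_cases i <;> simp [m]
  refine ⟨coeff (m (2, 0)) F, coeff (m (1, 1)) F, coeff (m (0, 2)) F, coeff (m (1, 0)) F,
    coeff (m (0, 1)) F, coeff (m (0, 0)) F, fun x y => ?_⟩
  rw [eval_eq', Finset.sum_subset hsupp fun d _ hd => by simp [notMem_support_iff.mp hd],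
    Finset.sum_image hm.injOn]
  simp [S, m, Fin.prod_univ_two, add_assoc]

theorem exists_quadraticForm_eval_eq {R : Type*} [CommRing R]
    {F : MvPolynomial (Fin 2) R} (hF : F.totalDegree ≤ 2) :
    ∃ Q : QuadraticForm R (Fin 3 → R), ∀ x y : R, Q ![x, y, 1] = eval ![x, y] F := by
  obtain ⟨a, b, c, d, e, f, hF⟩ := exists_eval_eq_of_totalDegree_le_two hF
  let π : Fin 3 → (Fin 3 → R) →ₗ[R] R := LinearMap.proj
  refine ⟨a • QuadraticMap.linMulLin (π 0) (π 0) + b • QuadraticMap.linMulLin (π 0) (π 1)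
    + c • QuadraticMap.linMulLin (π 1) (π 1) + d • QuadraticMap.linMulLin (π 0) (π 2)
    + e • QuadraticMap.linMulLin (π 1) (π 2) + f • QuadraticMap.linMulLin (π 2) (π 2),
    fun x y => ?_⟩
  simp only [add_apply, smul_apply, QuadraticMap.linMulLin_apply,
    LinearMap.coe_proj, Function.eval, Matrix.cons_val, smul_eq_mul, hF, π]
  ring

end MvPolynomial

section BarycentricCubic

variable {K : Type*} [CommRing K]

def baryCubic (α β γ δ₀ δ₁ δ₂ t : K) : Fin 3 → K :=
  ![α * (1 - t) ^ 3 - δ₀ * t ^ 3, β * (t * (1 - t) ^ 2) - δ₁ * t ^ 3,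
    γ * (t ^ 2 * (1 - t)) - δ₂ * t ^ 3]

/-- `y² - x z - r y z + r² z²` with `x = X/α`, `y = Y/β`, `z = Z/γ`, `r = δ₂/γ`, cleared of
denominators. This conic is parametrised by `(1 + r s + r² s², s + r s², s²)`, which is `baryCubic`
after removing the common factor `(1 - t) - r t` and setting `s = t / (1 - t)`. -/
def baryConic (α β γ δ₂ : K) (v : Fin 3 → K) : K :=
  α * γ ^ 4 * v 1 ^ 2 - β ^ 2 * γ ^ 3 * (v 0 * v 2) - α * β * γ ^ 2 * δ₂ * (v 1 * v 2)
    + α * β ^ 2 * δ₂ ^ 2 * v 2 ^ 2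

theorem baryConic_smul (α β γ δ₂ a : K) (v : Fin 3 → K) :
    baryConic α β γ δ₂ (a • v) = a ^ 2 * baryConic α β γ δ₂ v := by
  simp only [baryConic, Pi.smul_apply, smul_eq_mul]
  ring

theorem baryConic_baryCubic {α β γ δ₀ δ₁ δ₂ : K}
    (hR₂ : β * δ₂ ^ 2 = γ ^ 2 * δ₁) (hR₃ : γ ^ 3 * δ₀ = α * δ₂ ^ 3) (t : K) :
    baryConic α β γ δ₂ (baryCubic α β γ δ₀ δ₁ δ₂ t) = 0 := by
  simp only [baryConic, baryCubic, Matrix.cons_val]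
  linear_combination
    (2 * α * β * γ ^ 2 * (1 - t) ^ 2 * t ^ 4 - α * β * γ * δ₂ * (1 - t) * t ^ 5
      - α * γ ^ 2 * δ₁ * t ^ 6) * hR₂
    + (β ^ 2 * γ * (1 - t) * t ^ 5 - β ^ 2 * δ₂ * t ^ 6) * hR₃

end BarycentricCubic

open QuadraticMap in
theorem relations_of_quadraticForm_baryCubic_eq_zero {K : Type*} [Field K] [Infinite K]
    {Q : QuadraticForm K (Fin 3 → K)} (hQ : Q ≠ 0) {α β γ δ₀ δ₁ δ₂ : K}
    (hα : α ≠ 0) (hβ : β ≠ 0) (hγ : γ ≠ 0)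
    (h : {t | Q (baryCubic α β γ δ₀ δ₁ δ₂ t) = 0}.Infinite) :
    β * δ₂ ^ 2 = γ ^ 2 * δ₁ ∧ γ ^ 3 * δ₀ = α * δ₂ ^ 3 := by
  set q₀ := Q (Pi.single 0 1)
  set q₁ := Q (Pi.single 1 1)
  set q₂ := Q (Pi.single 2 1)
  set p₀₁ := polar Q (Pi.single 0 1) (Pi.single 1 1)
  set p₀₂ := polar Q (Pi.single 0 1) (Pi.single 2 1)
  set p₁₂ := polar Q (Pi.single 1 1) (Pi.single 2 1)
  have hcoeff := eq_zero_of_infinite_setOf_sum_bernstein_eq_zero (n := 6)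
    (e := ![q₀ * α ^ 2, p₀₁ * α * β, q₁ * β ^ 2 + p₀₂ * α * γ,
      -2 * q₀ * α * δ₀ - p₀₁ * α * δ₁ - p₀₂ * α * δ₂ + p₁₂ * β * γ,
      -2 * q₁ * β * δ₁ + q₂ * γ ^ 2 - p₀₁ * β * δ₀ - p₁₂ * β * δ₂,
      -2 * q₂ * γ * δ₂ - p₀₂ * γ * δ₀ - p₁₂ * γ * δ₁,
      q₀ * δ₀ ^ 2 + q₁ * δ₁ ^ 2 + q₂ * δ₂ ^ 2 + p₀₁ * δ₀ * δ₁ + p₀₂ * δ₀ * δ₂ + p₁₂ * δ₁ * δ₂])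
    (h.mono fun t (ht : Q _ = 0) => by
      rw [Set.mem_ofPred_eq, ← ht, QuadraticMap.apply_fin_three, Fin.sum_univ_seven]
      simp only [baryCubic, Matrix.cons_val, Fin.coe_ofNat_eq_mod]
      ring)
  have e2 : q₁ * β ^ 2 + p₀₂ * α * γ = 0 := congrFun hcoeff 2
  have e3 : -2 * q₀ * α * δ₀ - p₀₁ * α * δ₁ - p₀₂ * α * δ₂ + p₁₂ * β * γ = 0 := congrFun hcoeff 3
  have e4 : -2 * q₁ * β * δ₁ + q₂ * γ ^ 2 - p₀₁ * β * δ₀ - p₁₂ * β * δ₂ = 0 := congrFun hcoeff 4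
  have e5 : -2 * q₂ * γ * δ₂ - p₀₂ * γ * δ₀ - p₁₂ * γ * δ₁ = 0 := congrFun hcoeff 5
  have e6 : q₀ * δ₀ ^ 2 + q₁ * δ₁ ^ 2 + q₂ * δ₂ ^ 2 + p₀₁ * δ₀ * δ₁ + p₀₂ * δ₀ * δ₂
      + p₁₂ * δ₁ * δ₂ = 0 := congrFun hcoeff 6
  have hq₀ : q₀ = 0 := by simpa [hα] using congrFun hcoeff 0
  have hp₀₁ : p₀₁ = 0 := by simpa [hα, hβ] using congrFun hcoeff 1
  simp only [hq₀, hp₀₁, mul_zero, zero_mul, sub_zero, zero_sub, zero_add, add_zero] at e3 e4 e6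
  by_cases hp₀₂ : p₀₂ = 0
  · have hq₁ : q₁ = 0 := by simpa [hp₀₂, hβ] using e2
    have hp₁₂ : p₁₂ = 0 := by simpa [hp₀₂, hβ, hγ] using e3
    have hq₂ : q₂ = 0 := by simpa [hq₁, hp₁₂, hγ] using e4
    exact absurd (QuadraticMap.eq_zero_of_fin_three hq₀ hq₁ hq₂ hp₀₁ hp₀₂ hp₁₂) hQ
  have hA : β * γ ^ 3 * δ₀ = 3 * α * γ ^ 2 * δ₁ * δ₂ - 2 * α * β * δ₂ ^ 3 := by
    refine mul_left_cancel₀ hp₀₂ ?_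
    linear_combination (-β * γ ^ 2) * e5 - (2 * β * γ * δ₂) * e4 - (4 * γ * δ₁ * δ₂) * e2
      - (2 * β * δ₂ ^ 2 + γ ^ 2 * δ₁) * e3
  have hsq : (γ ^ 2 * δ₁ - β * δ₂ ^ 2) ^ 2 = 0 := by
    refine (mul_eq_zero.mp ?_).resolve_left (mul_ne_zero hα hp₀₂)
    linear_combination (-β ^ 2 * γ ^ 3) * e6 + (γ ^ 3 * δ₁ ^ 2 + 2 * β * γ * δ₁ * δ₂ ^ 2) * e2
      + (β ^ 2 * δ₂ ^ 3 + β * γ ^ 2 * δ₁ * δ₂) * e3 + (β ^ 2 * γ * δ₂ ^ 2) * e4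
      + (p₀₂ * β * δ₂) * hA
  have hR₂ : β * δ₂ ^ 2 = γ ^ 2 * δ₁ := by linear_combination -(pow_eq_zero_iff two_ne_zero).mp hsq
  refine ⟨hR₂, mul_left_cancel₀ hβ ?_⟩
  linear_combination hA - 3 * α * δ₂ * hR₂

section Geometry

def bary (c₀ c₁ c₂ P : ℝ × ℝ) : Fin 3 → ℝ :=
  ![lineL c₁ c₂ P.1 P.2, lineL c₂ c₀ P.1 P.2, lineL c₀ c₁ P.1 P.2]

open Matrix in
theorem mulVec_bary (c₀ c₁ c₂ P : ℝ × ℝ) :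
    !![c₀.1, c₁.1, c₂.1; c₀.2, c₁.2, c₂.2; 1, 1, 1] *ᵥ bary c₀ c₁ c₂ P
      = lam c₀ c₁ c₂ • ![P.1, P.2, 1] := by
  ext i
  fin_cases i <;>
    simp only [bary, lineL, lam, det3, mulVec, dotProduct, Fin.sum_univ_three, of_apply, cons_val,
      Fin.zero_eta, Fin.mk_one, Fin.reduceFinMk, Pi.smul_apply, smul_eq_mul] <;>
    ring

theorem smul_bary_of_eq_bezier {c₀ c₁ c₂ c₃ P : ℝ × ℝ} {u₀ u₁ u₂ u₃ t W : ℝ}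
    (hW : W = u₀ * (1 - t) ^ 3 + u₁ * (t * (1 - t) ^ 2) + u₂ * (t ^ 2 * (1 - t)) + u₃ * t ^ 3)
    (hW₀ : W ≠ 0)
    (hP : P = W⁻¹ • ((u₀ * (1 - t) ^ 3) • c₀ + (u₁ * (t * (1 - t) ^ 2)) • c₁ +
        (u₂ * (t ^ 2 * (1 - t))) • c₂ + (u₃ * t ^ 3) • c₃)) :
    W • bary c₀ c₁ c₂ P = baryCubic (u₀ * lam c₀ c₁ c₂) (u₁ * lam c₀ c₁ c₂) (u₂ * lam c₀ c₁ c₂)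
      (u₃ * lam c₃ c₂ c₁) (u₃ * lam c₂ c₃ c₀) (u₃ * lam c₁ c₀ c₃) t := by
  subst hP
  ext i
  fin_cases i <;>
    simp only [bary, baryCubic, lineL, lam, det3, Prod.smul_fst, Prod.smul_snd, Prod.fst_add,
      Prod.snd_add, smul_eq_mul, Pi.smul_apply, Matrix.cons_val, Fin.zero_eta, Fin.mk_one,
      Fin.reduceFinMk] <;>
    field_simp <;> rw [hW] <;> ring

open MvPolynomial

def lineLPoly (p q : ℝ × ℝ) : MvPolynomial (Fin 2) ℝ :=
  C (p.2 - q.2) * X 0 - C (p.1 - q.1) * X 1 + C (p.1 * q.2 - p.2 * q.1)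

theorem eval_lineLPoly (p q : ℝ × ℝ) (x y : ℝ) :
    eval ![x, y] (lineLPoly p q) = lineL p q x y := by
  simp only [lineLPoly, lineL, det3, map_add, map_sub, map_mul, eval_C, eval_X, Matrix.cons_val]
  ring

theorem totalDegree_lineLPoly_le (p q : ℝ × ℝ) : (lineLPoly p q).totalDegree ≤ 1 := by
  refine (totalDegree_add _ _).trans
    (max_le ((totalDegree_sub _ _).trans (max_le ?_ ?_)) ((totalDegree_C _).trans_le zero_le_one))
  all_goals exact (totalDegree_mul _ _).trans (by rw [totalDegree_C, totalDegree_X])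

theorem totalDegree_C_mul_lineLPoly_mul_le (a : ℝ) (p q p' q' : ℝ × ℝ) :
    (C a * (lineLPoly p q * lineLPoly p' q')).totalDegree ≤ 2 :=
  (totalDegree_mul _ _).trans <| by
    rw [totalDegree_C, zero_add]
    exact (totalDegree_mul _ _).trans (add_le_add (totalDegree_lineLPoly_le p q)
      (totalDegree_lineLPoly_le p' q'))

theorem relations_of_exists_conic {c₀ c₁ c₂ : ℝ × ℝ} (hl : lam c₀ c₁ c₂ ≠ 0)
    {α β γ δ₀ δ₁ δ₂ : ℝ} (hα : α ≠ 0) (hβ : β ≠ 0) (hγ : γ ≠ 0)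
    {S : Set ℝ} (hS : S.Infinite) {W : ℝ → ℝ} {P : ℝ → ℝ × ℝ}
    (hPW : ∀ t ∈ S, W t • bary c₀ c₁ c₂ (P t) = baryCubic α β γ δ₀ δ₁ δ₂ t)
    {F : MvPolynomial (Fin 2) ℝ} (hF₀ : F ≠ 0) (hF : F.totalDegree ≤ 2)
    (hFP : ∀ t ∈ S, eval ![(P t).1, (P t).2] F = 0) :
    β * δ₂ ^ 2 = γ ^ 2 * δ₁ ∧ γ ^ 3 * δ₀ = α * δ₂ ^ 3 := by
  obtain ⟨Q, hQ⟩ := exists_quadraticForm_eval_eq hF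
  let Ψ := Q.comp (Matrix.toLin' !![c₀.1, c₁.1, c₂.1; c₀.2, c₁.2, c₂.2; 1, 1, 1])
  have hΨ : ∀ X, Ψ (bary c₀ c₁ c₂ X) = lam c₀ c₁ c₂ ^ 2 * eval ![X.1, X.2] F := by
    intro X
    rw [QuadraticMap.comp_apply, Matrix.toLin'_apply, mulVec_bary, QuadraticMap.map_smul, hQ,
      smul_eq_mul, _root_.sq]
  refine relations_of_quadraticForm_baryCubic_eq_zero (Q := Ψ) (fun h => hF₀ ?_) hα hβ hγ
    (hS.mono fun t ht => ?_)
  · refine MvPolynomial.funext fun v => ?_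
    have hv := hΨ (v 0, v 1)
    rw [h] at hv
    simpa [hl, show ![v 0, v 1] = v from by ext i; fin_cases i <;> rfl] using hv
  · rw [Set.mem_ofPred_eq, ← hPW t ht, QuadraticMap.map_smul, hΨ, hFP t ht]
    simp

theorem exists_conic_of_relations {c₀ c₁ c₂ : ℝ × ℝ} (hl : lam c₀ c₁ c₂ ≠ 0)
    {α β γ δ₀ δ₁ δ₂ : ℝ} (hα : α ≠ 0) (hγ : γ ≠ 0)
    (hR₂ : β * δ₂ ^ 2 = γ ^ 2 * δ₁) (hR₃ : γ ^ 3 * δ₀ = α * δ₂ ^ 3) :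
    ∃ F : MvPolynomial (Fin 2) ℝ, F ≠ 0 ∧ F.totalDegree ≤ 2 ∧
      ∀ (W t : ℝ) (P : ℝ × ℝ), W ≠ 0 → W • bary c₀ c₁ c₂ P = baryCubic α β γ δ₀ δ₁ δ₂ t →
        eval ![P.1, P.2] F = 0 := by
  let F := C (α * γ ^ 4) * (lineLPoly c₂ c₀ * lineLPoly c₂ c₀)
    - C (β ^ 2 * γ ^ 3) * (lineLPoly c₁ c₂ * lineLPoly c₀ c₁)
    - C (α * β * γ ^ 2 * δ₂) * (lineLPoly c₂ c₀ * lineLPoly c₀ c₁)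
    + C (α * β ^ 2 * δ₂ ^ 2) * (lineLPoly c₀ c₁ * lineLPoly c₀ c₁)
  have hF : ∀ P : ℝ × ℝ, eval ![P.1, P.2] F = baryConic α β γ δ₂ (bary c₀ c₁ c₂ P) := by
    intro P
    simp only [F, baryConic, bary, eval_lineLPoly, map_add, map_sub, map_mul, eval_C,
      Matrix.cons_val]
    ring
  have hdeg := totalDegree_C_mul_lineLPoly_mul_le
  refine ⟨F, fun h => ?_, ?_, fun W t P hW hP => ?_⟩
  · have hc₁ : bary c₀ c₁ c₂ c₁ = ![0, lam c₀ c₁ c₂, 0] := by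
      ext i
      fin_cases i <;>
        simp only [bary, lineL, lam, det3, Matrix.cons_val, Fin.zero_eta, Fin.mk_one,
          Fin.reduceFinMk] <;>
        ring
    have h₁ := hF c₁
    rw [h, map_zero, hc₁] at h₁
    refine mul_ne_zero (mul_ne_zero hα (pow_ne_zero 4 hγ)) (pow_ne_zero 2 hl) ?_
    simpa [baryConic] using h₁.symm
  · exact (totalDegree_add _ _).trans (max_le ((totalDegree_sub _ _).trans
      (max_le ((totalDegree_sub _ _).trans (max_le (hdeg ..) (hdeg ..))) (hdeg ..))) (hdeg ..))
  · have hconic := baryConic_baryCubic hR₂ hR₃ t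
    rw [← hP, baryConic_smul] at hconic
    rw [hF]
    exact (mul_eq_zero.mp hconic).resolve_left (pow_ne_zero 2 hW)

end Geometry

section CoefficientRelations

variable {K : Type*} [Field K] {u₀ u₁ u₂ u₃ l₀ l₁ l₂ l₃ : K}

theorem cross_relation (hu₂ : u₂ ≠ 0) (hl₁ : l₁ ≠ 0)
    (h₁ : l₁ ^ 2 * (u₀ * u₂) = u₁ ^ 2 * (l₀ * l₂)) (h₂ : l₂ ^ 2 * (u₁ * u₃) = u₂ ^ 2 * (l₁ * l₃)) :
    l₀ * l₃ * (u₁ * u₂) = u₀ * u₃ * (l₁ * l₂) :=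
  mul_left_cancel₀ (mul_ne_zero hu₂ hl₁) (by linear_combination (-(u₁ * l₀)) * h₂ - (u₃ * l₂) * h₁)

theorem implicitCoeffs_eq_zero_iff (hu₀ : u₀ ≠ 0) (hu₁ : u₁ ≠ 0) (hu₂ : u₂ ≠ 0) (hu₃ : u₃ ≠ 0)
    (hl₀ : l₀ ≠ 0) (hl₁ : l₁ ≠ 0) (hl₂ : l₂ ≠ 0) (hl₃ : l₃ ≠ 0) :
    (-(l₁ ^ 2 * l₂ ^ 2 * (u₀ * u₁ * u₂ * u₃) - u₁ ^ 2 * u₂ ^ 2 * (l₀ * l₁ * l₂ * l₃)) = 0 ∧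
      l₁ ^ 3 * l₃ * (u₀ * u₁ * u₂ * u₃) - u₁ ^ 3 * u₃ * (l₀ * l₁ * l₂ * l₃) = 0 ∧
      l₀ * l₂ ^ 3 * (u₀ * u₁ * u₂ * u₃) - u₀ * u₂ ^ 3 * (l₀ * l₁ * l₂ * l₃) = 0 ∧
      l₀ ^ 2 * l₃ ^ 2 * (u₀ * u₁ * u₂ * u₃) - u₀ ^ 2 * u₃ ^ 2 * (l₀ * l₁ * l₂ * l₃) = 0) ↔
    (l₁ ^ 2 * (u₀ * u₂) = u₁ ^ 2 * (l₀ * l₂) ∧ l₂ ^ 2 * (u₁ * u₃) = u₂ ^ 2 * (l₁ * l₃)) := by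
  constructor
  · rintro ⟨-, hb₁, hb₂, -⟩
    exact ⟨mul_left_cancel₀ (mul_ne_zero (mul_ne_zero (mul_ne_zero hl₁ hl₃) hu₁) hu₃)
        (by linear_combination hb₁),
      mul_left_cancel₀ (mul_ne_zero (mul_ne_zero (mul_ne_zero hl₀ hl₂) hu₀) hu₂)
        (by linear_combination hb₂)⟩
  · rintro ⟨h₁, h₂⟩
    have h₃ := cross_relation hu₂ hl₁ h₁ h₂
    refine ⟨?_, ?_, ?_, ?_⟩
    · linear_combination (-(l₂ ^ 2 * (u₁ * u₃))) * h₁ - (u₁ ^ 2 * (l₀ * l₂)) * h₂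
    · linear_combination (l₁ * l₃ * (u₁ * u₃)) * h₁
    · linear_combination (l₀ * l₂ * (u₀ * u₂)) * h₂
    · linear_combination (l₀ * l₃ * (u₀ * u₃)) * h₃

theorem baryCubic_relations_iff (hu₂ : u₂ ≠ 0) (hu₃ : u₃ ≠ 0)
    (hl₁ : l₁ ≠ 0) (hl₂ : l₂ ≠ 0) (hl₃ : l₃ ≠ 0) :
    (u₁ * l₃ * (u₃ * l₂) ^ 2 = (u₂ * l₃) ^ 2 * (u₃ * l₁) ∧
      (u₂ * l₃) ^ 3 * (u₃ * l₀) = u₀ * l₃ * (u₃ * l₂) ^ 3) ↔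
    (l₁ ^ 2 * (u₀ * u₂) = u₁ ^ 2 * (l₀ * l₂) ∧ l₂ ^ 2 * (u₁ * u₃) = u₂ ^ 2 * (l₁ * l₃)) := by
  constructor
  · rintro ⟨hR₂, hR₃⟩
    have h₂ : l₂ ^ 2 * (u₁ * u₃) = u₂ ^ 2 * (l₁ * l₃) :=
      mul_left_cancel₀ (mul_ne_zero hu₃ hl₃) (by linear_combination hR₂)
    have h₃ : l₀ * l₃ * (u₁ * u₂) = u₀ * u₃ * (l₁ * l₂) := by
      refine mul_left_cancel₀ (mul_ne_zero (mul_ne_zero hl₃ (pow_ne_zero 2 hl₂))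
        (pow_ne_zero 2 hu₃)) ?_
      linear_combination l₁ * hR₃ + (u₂ * l₀ * l₃ ^ 2 * u₃) * h₂
    refine ⟨mul_left_cancel₀ (mul_ne_zero hu₃ hl₂) ?_, h₂⟩
    linear_combination (-(u₂ * l₁)) * h₃ - (u₁ * l₀) * h₂
  · rintro ⟨h₁, h₂⟩
    have h₃ := cross_relation hu₂ hl₁ h₁ h₂
    refine ⟨by linear_combination (u₃ * l₃) * h₂, mul_left_cancel₀ hl₁ ?_⟩
    linear_combination (-l₃ * u₃ * u₂ * l₀ * l₃) * h₂ + (l₃ * u₃ * l₂ ^ 2 * u₃) * h₃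

end CoefficientRelations

theorem implicitCoeffs_eq_zero_of_forall_eq_zero {c₀ c₁ c₂ c₃ : ℝ × ℝ} (hl₀ : lam c₃ c₂ c₁ ≠ 0)
    (hl₁ : lam c₂ c₃ c₀ ≠ 0) (hl₂ : lam c₁ c₀ c₃ ≠ 0) (hl₃ : lam c₀ c₁ c₂ ≠ 0) {b₀ b₁ b₂ b₃ : ℝ}
    (h : ∀ x y, b₀ * (lineL c₀ c₁ x y * lineL c₁ c₂ x y * lineL c₂ c₃ x y)
      + b₁ * (lineL c₀ c₁ x y * lineL c₁ c₃ x y ^ 2) + b₂ * (lineL c₀ c₂ x y ^ 2 * lineL c₂ c₃ x y)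
      + b₃ * lineL c₀ c₃ x y ^ 3 = 0) :
    b₀ = 0 ∧ b₁ = 0 ∧ b₂ = 0 ∧ b₃ = 0 := by
  -- on the line `(1 - τ) c₁ + τ c₂`: `L₀₁ = τ λ₃`, `L₁₃ = τ λ₀`, `L₀₂ = -(1 - τ) λ₃`,
  -- `L₂₃ = -(1 - τ) λ₀`, `L₀₃ = (1 - τ) λ₂ - τ λ₁` and `L₁₂ = 0`
  have hline := eq_zero_of_infinite_setOf_sum_bernstein_eq_zero (n := 3)
    (e := ![b₃ * lam c₁ c₀ c₃ ^ 3 - b₂ * lam c₃ c₂ c₁ * lam c₀ c₁ c₂ ^ 2,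
      -3 * b₃ * lam c₂ c₃ c₀ * lam c₁ c₀ c₃ ^ 2, 3 * b₃ * lam c₂ c₃ c₀ ^ 2 * lam c₁ c₀ c₃,
      b₁ * lam c₃ c₂ c₁ ^ 2 * lam c₀ c₁ c₂ - b₃ * lam c₂ c₃ c₀ ^ 3])
    (Set.infinite_univ.mono fun τ _ => by
      have hτ := h ((1 - τ) * c₁.1 + τ * c₂.1) ((1 - τ) * c₁.2 + τ * c₂.2)
      rw [Set.mem_ofPred_eq, Fin.sum_univ_four]
      simp only [lineL, det3] at hτ
      simp only [lam, det3, Matrix.cons_val, Fin.coe_ofNat_eq_mod]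
      linear_combination hτ)
  have e₀ : b₃ * lam c₁ c₀ c₃ ^ 3 - b₂ * lam c₃ c₂ c₁ * lam c₀ c₁ c₂ ^ 2 = 0 := congrFun hline 0
  have e₁ : -3 * b₃ * lam c₂ c₃ c₀ * lam c₁ c₀ c₃ ^ 2 = 0 := congrFun hline 1
  have e₃ : b₁ * lam c₃ c₂ c₁ ^ 2 * lam c₀ c₁ c₂ - b₃ * lam c₂ c₃ c₀ ^ 3 = 0 := congrFun hline 3
  have hb₃ : b₃ = 0 := by simpa [hl₁, hl₂] using e₁
  have hb₂ : b₂ = 0 := by simpa [hb₃, hl₀, hl₃] using e₀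
  have hb₁ : b₁ = 0 := by simpa [hb₃, hl₀, hl₃] using e₃
  refine ⟨?_, hb₁, hb₂, hb₃⟩
  have hm := h ((c₁.1 + c₃.1) / 2) ((c₁.2 + c₃.2) / 2)
  have : b₀ * (lam c₁ c₀ c₃ * lam c₃ c₂ c₁ ^ 2) = 0 := by
    simp only [hb₁, hb₂, hb₃, lineL, lam, det3] at hm ⊢
    linear_combination -8 * hm
  simpa [hl₀, hl₂] using this

/-- equivalence of conic degeneration, vanishing of all coefficients
`bᵢ`, and the identical vanishing of `q`. -/
theorem conic_degeneration_tfae (c0 c1 c2 c3 : ℝ × ℝ) (w0 w1 w2 w3 : ℝ)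
    (hw0 : w0 ≠ 0) (hw1 : w1 ≠ 0) (hw2 : w2 ≠ 0) (hw3 : w3 ≠ 0)
    (u0 u1 u2 u3 : ℝ)
    (hu0 : u0 = w0) (hu1 : u1 = 3 * w1) (hu2 : u2 = 3 * w2) (hu3 : u3 = w3)
    (l0 l1 l2 l3 : ℝ)
    (hl0 : l0 = lam c3 c2 c1) (hl1 : l1 = lam c2 c3 c0)
    (hl2 : l2 = lam c1 c0 c3) (hl3 : l3 = lam c0 c1 c2)
    (hnc0 : l0 ≠ 0) (hnc1 : l1 ≠ 0) (hnc2 : l2 ≠ 0) (hnc3 : l3 ≠ 0)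
    (K0 K1 K2 K3 : ℝ → ℝ → ℝ)
    (hK0 : ∀ x y, K0 x y = lineL c0 c1 x y * lineL c1 c2 x y * lineL c2 c3 x y)
    (hK1 : ∀ x y, K1 x y = lineL c0 c1 x y * (lineL c1 c3 x y) ^ 2)
    (hK2 : ∀ x y, K2 x y = (lineL c0 c2 x y) ^ 2 * lineL c2 c3 x y)
    (hK3 : ∀ x y, K3 x y = (lineL c0 c3 x y) ^ 3)
    (U L b0 b1 b2 b3 : ℝ)
    (hU : U = u0 * u1 * u2 * u3) (hL : L = l0 * l1 * l2 * l3)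
    (hb0 : b0 = -(l1 ^ 2 * l2 ^ 2 * U - u1 ^ 2 * u2 ^ 2 * L))
    (hb1 : b1 = l1 ^ 3 * l3 * U - u1 ^ 3 * u3 * L)
    (hb2 : b2 = l0 * l2 ^ 3 * U - u0 * u2 ^ 3 * L)
    (hb3 : b3 = l0 ^ 2 * l3 ^ 2 * U - u0 ^ 2 * u3 ^ 2 * L)
    (q : ℝ → ℝ → ℝ)
    (hq : ∀ x y, q x y = b0 * K0 x y + b1 * K1 x y + b2 * K2 x y + b3 * K3 x y)
    (w : ℝ → ℝ) (p : ℝ → ℝ × ℝ)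
    (hw : ∀ t, w t = u0 * (1 - t) ^ 3 + u1 * (t * (1 - t) ^ 2) + u2 * (t ^ 2 * (1 - t)) + u3 * t ^ 3)
    (hp : ∀ t, w t ≠ 0 → p t = (w t)⁻¹ •
      ((u0 * (1 - t) ^ 3) • c0 + (u1 * (t * (1 - t) ^ 2)) • c1 +
        (u2 * (t ^ 2 * (1 - t))) • c2 + (u3 * t ^ 3) • c3)) :
    ((∃ F : MvPolynomial (Fin 2) ℝ, F ≠ 0 ∧ F.totalDegree ≤ 2 ∧
          ∀ t, w t ≠ 0 → MvPolynomial.eval ![(p t).1, (p t).2] F = 0) ↔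
        (b0 = 0 ∧ b1 = 0 ∧ b2 = 0 ∧ b3 = 0)) ∧
      ((b0 = 0 ∧ b1 = 0 ∧ b2 = 0 ∧ b3 = 0) ↔ ∀ x y : ℝ, q x y = 0) := by
  have hu₀ : u0 ≠ 0 := hu0 ▸ hw0
  have hu₁ : u1 ≠ 0 := hu1 ▸ mul_ne_zero three_ne_zero hw1
  have hu₂ : u2 ≠ 0 := hu2 ▸ mul_ne_zero three_ne_zero hw2
  have hu₃ : u3 ≠ 0 := hu3 ▸ hw3
  subst hl0 hl1 hl2 hl3 hU hL
  have hcurve : ∀ t ∈ {t | w t ≠ 0}, w t • bary c0 c1 c2 (p t) = baryCubic (u0 * lam c0 c1 c2)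
      (u1 * lam c0 c1 c2) (u2 * lam c0 c1 c2) (u3 * lam c3 c2 c1) (u3 * lam c2 c3 c0)
      (u3 * lam c1 c0 c3) t :=
    fun t ht => smul_bary_of_eq_bezier (hw t) ht (hp t ht)
  have hinf : {t | w t ≠ 0}.Infinite := by
    simpa only [hw] using infinite_setOf_bezierWeight_ne_zero hu₀ u1 u2 u3
  refine ⟨?_, ⟨fun ⟨h0, h1, h2, h3⟩ x y => by simp [hq, h0, h1, h2, h3], fun h =>
    implicitCoeffs_eq_zero_of_forall_eq_zero hnc0 hnc1 hnc2 hnc3 fun x y => by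
      rw [← hK0, ← hK1, ← hK2, ← hK3, ← hq]; exact h x y⟩⟩
  rw [hb0, hb1, hb2, hb3, implicitCoeffs_eq_zero_iff hu₀ hu₁ hu₂ hu₃ hnc0 hnc1 hnc2 hnc3,
    ← baryCubic_relations_iff hu₂ hu₃ hnc1 hnc2 hnc3]
  constructor
  · rintro ⟨F, hF₀, hF, hFp⟩
    exact relations_of_exists_conic hnc3 (mul_ne_zero hu₀ hnc3) (mul_ne_zero hu₁ hnc3)
      (mul_ne_zero hu₂ hnc3) hinf hcurve hF₀ hF hFp
  · rintro ⟨hR₂, hR₃⟩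
    obtain ⟨F, hF₀, hF, hFp⟩ :=
      exists_conic_of_relations hnc3 (mul_ne_zero hu₀ hnc3) (mul_ne_zero hu₂ hnc3) hR₂ hR₃
    exact ⟨F, hF₀, hF, fun t ht => hFp _ _ _ ht (hcurve t ht)⟩
end
end

section
/- For any control points and weights, any distinct indices i, j ∈ {0,1,2,3}, and every t ∈ ℝ with w(t) ≠ 0, the identity w(t)·L_{ij}(p(t)) = Σ_{k=0}^{3} λ_{ijk}·u_k·t^k(1−t)^{3−k} holds (the terms with k = i or k = j vanish since λ_{ijk} = 0 when two indices coincide). -/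
noncomputable section

theorem lam_eq_lineL (a b q : ℝ × ℝ) : lam a b q = lineL a b q.1 q.2 := by
  simp only [lam, lineL, det3]
  ring

/-- The homogenised line form `W · L(X/W, Y/W)` is linear in `(X, Y, W)`, so it commutes with
weighted sums of points. -/
theorem sum_mul_lineL_centerMass {ι : Type*} (s : Finset ι) (m : ι → ℝ) (q : ι → ℝ × ℝ)
    (a b : ℝ × ℝ) (hm : ∑ k ∈ s, m k ≠ 0) :
    (∑ k ∈ s, m k) * lineL a b (s.centerMass m q).1 (s.centerMass m q).2 =
      ∑ k ∈ s, m k * lam a b (q k) := by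
  rw [Finset.centerMass]
  simp only [lam_eq_lineL, lineL, det3, Prod.smul_fst, Prod.smul_snd, Prod.fst_sum,
    Prod.snd_sum, smul_eq_mul]
  field_simp
  simp only [Finset.sum_mul, ← Finset.sum_sub_distrib, ← Finset.sum_add_distrib]
  refine Finset.sum_congr rfl fun k _ => ?_
  ring

theorem line_composed_with_curve_general (c : Fin 4 → ℝ × ℝ)
    (u : Fin 4 → ℝ)
    (w : ℝ → ℝ) (p : ℝ → ℝ × ℝ)
    (hw : ∀ t, w t = u 0 * (1 - t) ^ 3 + u 1 * (t * (1 - t) ^ 2) +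
      u 2 * (t ^ 2 * (1 - t)) + u 3 * t ^ 3)
    (hp : ∀ t, w t ≠ 0 → p t = (w t)⁻¹ •
      ((u 0 * (1 - t) ^ 3) • c 0 + (u 1 * (t * (1 - t) ^ 2)) • c 1 +
        (u 2 * (t ^ 2 * (1 - t))) • c 2 + (u 3 * t ^ 3) • c 3)) :
    ∀ i j : Fin 4, i ≠ j → ∀ t, w t ≠ 0 →
      w t * lineL (c i) (c j) (p t).1 (p t).2 =
        lam (c i) (c j) (c 0) * u 0 * (1 - t) ^ 3 +
          lam (c i) (c j) (c 1) * u 1 * (t * (1 - t) ^ 2) +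
          lam (c i) (c j) (c 2) * u 2 * (t ^ 2 * (1 - t)) +
          lam (c i) (c j) (c 3) * u 3 * t ^ 3 := by
  intro i j _ t hwt
  let m : Fin 4 → ℝ := ![u 0 * (1 - t) ^ 3, u 1 * (t * (1 - t) ^ 2),
    u 2 * (t ^ 2 * (1 - t)), u 3 * t ^ 3]
  have hw_sum : w t = ∑ k, m k := by simp [m, Fin.sum_univ_four, hw t]
  have hp_sum : p t = Finset.univ.centerMass m c := by
    simp [Finset.centerMass, m, Fin.sum_univ_four, hp t hwt, ← hw_sum]
  rw [hw_sum] at hwt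
  rw [hp_sum, hw_sum, sum_mul_lineL_centerMass (hm := hwt)]
  simp only [m, Fin.sum_univ_four, Fin.isValue, Matrix.cons_val_zero, Matrix.cons_val_one,
    Matrix.cons_val]
  ring

/-- Bernstein expansion of `w(t)·L_{ij}(p(t))` with coefficients
`λ_{ijk}·u_k`. -/
theorem line_composed_with_curve (c : Fin 4 → ℝ × ℝ) (w0 w1 w2 w3 : ℝ)
    (u : Fin 4 → ℝ) (hu : u = ![w0, 3 * w1, 3 * w2, w3])
    (w : ℝ → ℝ) (p : ℝ → ℝ × ℝ)
    (hw : ∀ t, w t = u 0 * (1 - t) ^ 3 + u 1 * (t * (1 - t) ^ 2) +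
      u 2 * (t ^ 2 * (1 - t)) + u 3 * t ^ 3)
    (hp : ∀ t, w t ≠ 0 → p t = (w t)⁻¹ •
      ((u 0 * (1 - t) ^ 3) • c 0 + (u 1 * (t * (1 - t) ^ 2)) • c 1 +
        (u 2 * (t ^ 2 * (1 - t))) • c 2 + (u 3 * t ^ 3) • c 3)) :
    ∀ i j : Fin 4, i ≠ j → ∀ t, w t ≠ 0 →
      w t * lineL (c i) (c j) (p t).1 (p t).2 =
        lam (c i) (c j) (c 0) * u 0 * (1 - t) ^ 3 +
          lam (c i) (c j) (c 1) * u 1 * (t * (1 - t) ^ 2) +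
          lam (c i) (c j) (c 2) * u 2 * (t ^ 2 * (1 - t)) +
          lam (c i) (c j) (c 3) * u 3 * t ^ 3 :=
  line_composed_with_curve_general c u w p hw hp
end
end

section
/- For any control points and weights and every t ∈ ℝ with w(t) ≠ 0, one has w(t)³·K_i(p(t)) = t²(1−t)²·G_i(t) for each i = 0,1,2,3, where G0(t) = (u2λ3(1−t) − u3λ2t)·(u0λ3(1−t)³ − u3λ0t³)·(u0λ1(1−t) − u1λ0t), G1(t) = (u2λ3(1−t) − u3λ2t)·(u0λ2(1−t)² − u2λ0t²)², G2(t) = (u1λ3(1−t)² − u3λ1t²)²·(u0λ1(1−t) − u1λ0t), and G3(t) = t(1−t)·(u1λ2(1−t) − u2λ1t)³. -/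
/-!
Each `L_{ij}` is affine, so clearing the denominator of `p(t)` gives
`w(t) · L_{ij}(p(t)) = Σₖ Bₖ(t) L_{ij}(cₖ)` with `Bₖ(t) = uₖ tᵏ (1-t)³⁻ᵏ`. The terms `k = i, j`
vanish and the other two are determinants `λ`, so each `w · L_{ij}(p)` is a binomial in `t`
and `1 - t`; multiplying these out factor by factor gives the products `Gᵢ` together with the
common factor `t²(1-t)²`.
-/

noncomputable section

theorem lineL_left_s17 (a b : ℝ × ℝ) : lineL a b a.1 a.2 = 0 := by
  unfold lineL det3; ring

theorem lineL_right_s17 (a b : ℝ × ℝ) : lineL a b b.1 b.2 = 0 := by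
  unfold lineL det3; ring

theorem mul_lineL_of_smul_eq_sum {ι : Type*} (s : Finset ι) (β : ι → ℝ) (c : ι → ℝ × ℝ)
    (W : ℝ) (z : ℝ × ℝ) (hW : W = ∑ i ∈ s, β i) (hz : W • z = ∑ i ∈ s, β i • c i)
    (a b : ℝ × ℝ) :
    W * lineL a b z.1 z.2 = ∑ i ∈ s, β i * lineL a b (c i).1 (c i).2 := by
  have hx : W * z.1 = ∑ i ∈ s, β i * (c i).1 := by
    simpa [Prod.fst_sum] using congrArg Prod.fst hz
  have hy : W * z.2 = ∑ i ∈ s, β i * (c i).2 := by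
    simpa [Prod.snd_sum] using congrArg Prod.snd hz
  calc W * lineL a b z.1 z.2
      = (W * z.1) * (a.2 - b.2) - (W * z.2) * (a.1 - b.1) + W * (a.1 * b.2 - a.2 * b.1) := by
        unfold lineL det3; ring
    _ = ∑ i ∈ s, β i * lineL a b (c i).1 (c i).2 := by
        rw [hx, hy, hW]
        simp only [Finset.sum_mul, ← Finset.sum_sub_distrib, ← Finset.sum_add_distrib]
        exact Finset.sum_congr rfl fun i _ => by unfold lineL det3; ring

theorem mul_lineL_cubicBezier (c0 c1 c2 c3 a b : ℝ × ℝ) (u0 u1 u2 u3 t W : ℝ) (z : ℝ × ℝ)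
    (hW : W = u0 * (1 - t) ^ 3 + u1 * (t * (1 - t) ^ 2) + u2 * (t ^ 2 * (1 - t)) + u3 * t ^ 3)
    (hz : W • z = (u0 * (1 - t) ^ 3) • c0 + (u1 * (t * (1 - t) ^ 2)) • c1 +
        (u2 * (t ^ 2 * (1 - t))) • c2 + (u3 * t ^ 3) • c3) :
    W * lineL a b z.1 z.2 = u0 * (1 - t) ^ 3 * lineL a b c0.1 c0.2 +
      u1 * (t * (1 - t) ^ 2) * lineL a b c1.1 c1.2 + u2 * (t ^ 2 * (1 - t)) * lineL a b c2.1 c2.2 +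
      u3 * t ^ 3 * lineL a b c3.1 c3.2 := by
  have := mul_lineL_of_smul_eq_sum Finset.univ
    ![u0 * (1 - t) ^ 3, u1 * (t * (1 - t) ^ 2), u2 * (t ^ 2 * (1 - t)), u3 * t ^ 3]
    ![c0, c1, c2, c3] W z (by simp [Fin.sum_univ_four, hW]) (by simp [Fin.sum_univ_four, hz]) a b
  simpa [Fin.sum_univ_four] using this

theorem basis_functions_composed_with_curve_general (c0 c1 c2 c3 : ℝ × ℝ)
    (u0 u1 u2 u3 : ℝ)
    (l0 l1 l2 l3 : ℝ)
    (hl0 : l0 = lam c3 c2 c1) (hl1 : l1 = lam c2 c3 c0)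
    (hl2 : l2 = lam c1 c0 c3) (hl3 : l3 = lam c0 c1 c2)
    (K0 K1 K2 K3 : ℝ → ℝ → ℝ)
    (hK0 : ∀ x y, K0 x y = lineL c0 c1 x y * lineL c1 c2 x y * lineL c2 c3 x y)
    (hK1 : ∀ x y, K1 x y = lineL c0 c1 x y * (lineL c1 c3 x y) ^ 2)
    (hK2 : ∀ x y, K2 x y = (lineL c0 c2 x y) ^ 2 * lineL c2 c3 x y)
    (hK3 : ∀ x y, K3 x y = (lineL c0 c3 x y) ^ 3)
    (w : ℝ → ℝ) (p : ℝ → ℝ × ℝ)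
    (hw : ∀ t, w t = u0 * (1 - t) ^ 3 + u1 * (t * (1 - t) ^ 2) + u2 * (t ^ 2 * (1 - t)) + u3 * t ^ 3)
    (hp : ∀ t, w t ≠ 0 → p t = (w t)⁻¹ •
      ((u0 * (1 - t) ^ 3) • c0 + (u1 * (t * (1 - t) ^ 2)) • c1 +
        (u2 * (t ^ 2 * (1 - t))) • c2 + (u3 * t ^ 3) • c3))
    (G0 G1 G2 G3 : ℝ → ℝ)
    (hG0 : ∀ t, G0 t = (u2 * l3 * (1 - t) - u3 * l2 * t) *
      (u0 * l3 * (1 - t) ^ 3 - u3 * l0 * t ^ 3) * (u0 * l1 * (1 - t) - u1 * l0 * t))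
    (hG1 : ∀ t, G1 t = (u2 * l3 * (1 - t) - u3 * l2 * t) *
      (u0 * l2 * (1 - t) ^ 2 - u2 * l0 * t ^ 2) ^ 2)
    (hG2 : ∀ t, G2 t = (u1 * l3 * (1 - t) ^ 2 - u3 * l1 * t ^ 2) ^ 2 *
      (u0 * l1 * (1 - t) - u1 * l0 * t))
    (hG3 : ∀ t, G3 t = t * (1 - t) * (u1 * l2 * (1 - t) - u2 * l1 * t) ^ 3) :
    ∀ t, w t ≠ 0 →
      (w t) ^ 3 * K0 (p t).1 (p t).2 = t ^ 2 * (1 - t) ^ 2 * G0 t ∧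
      (w t) ^ 3 * K1 (p t).1 (p t).2 = t ^ 2 * (1 - t) ^ 2 * G1 t ∧
      (w t) ^ 3 * K2 (p t).1 (p t).2 = t ^ 2 * (1 - t) ^ 2 * G2 t ∧
      (w t) ^ 3 * K3 (p t).1 (p t).2 = t ^ 2 * (1 - t) ^ 2 * G3 t := by
  intro t ht
  set L : ℝ × ℝ → ℝ × ℝ → ℝ := fun a b => w t * lineL a b (p t).1 (p t).2
  have hL (a b : ℝ × ℝ) : L a b = _ :=
    mul_lineL_cubicBezier c0 c1 c2 c3 a b u0 u1 u2 u3 t (w t) (p t) (hw t)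
      (by rw [hp t ht, smul_inv_smul₀ ht])
  have e01 : L c0 c1 = t ^ 2 * (u2 * l3 * (1 - t) - u3 * l2 * t) := by
    rw [hL, lineL_left_s17, lineL_right_s17, hl2, hl3]; unfold lineL lam det3; ring
  have e12 : L c1 c2 = u0 * l3 * (1 - t) ^ 3 - u3 * l0 * t ^ 3 := by
    rw [hL, lineL_left_s17, lineL_right_s17, hl0, hl3]; unfold lineL lam det3; ring
  have e23 : L c2 c3 = (1 - t) ^ 2 * (u0 * l1 * (1 - t) - u1 * l0 * t) := by
    rw [hL, lineL_left_s17, lineL_right_s17, hl0, hl1]; unfold lineL lam det3; ring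
  have e13 : L c1 c3 = -((1 - t) * (u0 * l2 * (1 - t) ^ 2 - u2 * l0 * t ^ 2)) := by
    rw [hL, lineL_left_s17, lineL_right_s17, hl0, hl2]; unfold lineL lam det3; ring
  have e02 : L c0 c2 = -(t * (u1 * l3 * (1 - t) ^ 2 - u3 * l1 * t ^ 2)) := by
    rw [hL, lineL_left_s17, lineL_right_s17, hl1, hl3]; unfold lineL lam det3; ring
  have e03 : L c0 c3 = t * (1 - t) * (u1 * l2 * (1 - t) - u2 * l1 * t) := by
    rw [hL, lineL_left_s17, lineL_right_s17, hl1, hl2]; unfold lineL lam det3; ring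
  refine ⟨?_, ?_, ?_, ?_⟩
  · calc w t ^ 3 * K0 (p t).1 (p t).2 = L c0 c1 * L c1 c2 * L c2 c3 := by rw [hK0]; ring
      _ = _ := by rw [e01, e12, e23, hG0]; ring
  · calc w t ^ 3 * K1 (p t).1 (p t).2 = L c0 c1 * L c1 c3 ^ 2 := by rw [hK1]; ring
      _ = _ := by rw [e01, e13, hG1]; ring
  · calc w t ^ 3 * K2 (p t).1 (p t).2 = L c0 c2 ^ 2 * L c2 c3 := by rw [hK2]; ring
      _ = _ := by rw [e02, e23, hG2]; ring
  · calc w t ^ 3 * K3 (p t).1 (p t).2 = L c0 c3 ^ 3 := by rw [hK3]; ring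
      _ = _ := by rw [e03, hG3]; ring

/-- `w(t)³·Kᵢ(p(t)) = t²(1−t)²·Gᵢ(t)` for `i = 0,1,2,3`. -/
theorem basis_functions_composed_with_curve (c0 c1 c2 c3 : ℝ × ℝ) (w0 w1 w2 w3 : ℝ)
    (u0 u1 u2 u3 : ℝ)
    (hu0 : u0 = w0) (hu1 : u1 = 3 * w1) (hu2 : u2 = 3 * w2) (hu3 : u3 = w3)
    (l0 l1 l2 l3 : ℝ)
    (hl0 : l0 = lam c3 c2 c1) (hl1 : l1 = lam c2 c3 c0)
    (hl2 : l2 = lam c1 c0 c3) (hl3 : l3 = lam c0 c1 c2)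
    (K0 K1 K2 K3 : ℝ → ℝ → ℝ)
    (hK0 : ∀ x y, K0 x y = lineL c0 c1 x y * lineL c1 c2 x y * lineL c2 c3 x y)
    (hK1 : ∀ x y, K1 x y = lineL c0 c1 x y * (lineL c1 c3 x y) ^ 2)
    (hK2 : ∀ x y, K2 x y = (lineL c0 c2 x y) ^ 2 * lineL c2 c3 x y)
    (hK3 : ∀ x y, K3 x y = (lineL c0 c3 x y) ^ 3)
    (w : ℝ → ℝ) (p : ℝ → ℝ × ℝ)
    (hw : ∀ t, w t = u0 * (1 - t) ^ 3 + u1 * (t * (1 - t) ^ 2) + u2 * (t ^ 2 * (1 - t)) + u3 * t ^ 3)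
    (hp : ∀ t, w t ≠ 0 → p t = (w t)⁻¹ •
      ((u0 * (1 - t) ^ 3) • c0 + (u1 * (t * (1 - t) ^ 2)) • c1 +
        (u2 * (t ^ 2 * (1 - t))) • c2 + (u3 * t ^ 3) • c3))
    (G0 G1 G2 G3 : ℝ → ℝ)
    (hG0 : ∀ t, G0 t = (u2 * l3 * (1 - t) - u3 * l2 * t) *
      (u0 * l3 * (1 - t) ^ 3 - u3 * l0 * t ^ 3) * (u0 * l1 * (1 - t) - u1 * l0 * t))
    (hG1 : ∀ t, G1 t = (u2 * l3 * (1 - t) - u3 * l2 * t) *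
      (u0 * l2 * (1 - t) ^ 2 - u2 * l0 * t ^ 2) ^ 2)
    (hG2 : ∀ t, G2 t = (u1 * l3 * (1 - t) ^ 2 - u3 * l1 * t ^ 2) ^ 2 *
      (u0 * l1 * (1 - t) - u1 * l0 * t))
    (hG3 : ∀ t, G3 t = t * (1 - t) * (u1 * l2 * (1 - t) - u2 * l1 * t) ^ 3) :
    ∀ t, w t ≠ 0 →
      (w t) ^ 3 * K0 (p t).1 (p t).2 = t ^ 2 * (1 - t) ^ 2 * G0 t ∧
      (w t) ^ 3 * K1 (p t).1 (p t).2 = t ^ 2 * (1 - t) ^ 2 * G1 t ∧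
      (w t) ^ 3 * K2 (p t).1 (p t).2 = t ^ 2 * (1 - t) ^ 2 * G2 t ∧
      (w t) ^ 3 * K3 (p t).1 (p t).2 = t ^ 2 * (1 - t) ^ 2 * G3 t :=
  basis_functions_composed_with_curve_general c0 c1 c2 c3 u0 u1 u2 u3 l0 l1 l2 l3 hl0 hl1 hl2 hl3 K0
    K1 K2 K3 hK0 hK1 hK2 hK3 w p hw hp G0 G1 G2 G3 hG0 hG1 hG2 hG3
end
end
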